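/- arXiv:2406.06179 — 5 statements merged into one kernel-verified Lean document; each statement's English description precedes it below -/
import Mathlib

section
/- Let H be a complex Hilbert space, A a self-adjoint operator on H, and J an anti-unitary involution on H such that J e^{itA} J = e^{itA} for all real t. Then for every bounded Borel function f : ℝ → ℂ, one has f(-A) = J \overline{f}(A) J; in particular, for every Borel set B ⊆ ℝ, the spectral projections satisfy 1_{-B}(A) = J 1_B(A) J. -/
/-!
The bounded Borel functions `f` with `f(-A) = J f̄(A) J` form a class that is closed under
linear combinations and under bounded pointwise limits (by dominated convergence for the
functional calculus and continuity of `J`), and it contains every character `s ↦ e^{its}`,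
since for it both sides equal `e^{-itA}`. Any such class contains all bounded Borel functions:
the Fourier modes span a dense subspace of `C(ℝ/Tℤ)`, which gives continuous periodic
functions; periodizing gives continuous functions of compact support; cutting off gives bounded
continuous functions; thickened indicators give indicators of closed sets; Dynkin's π-λ theorem
gives indicators of Borel sets, and approximation by simple functions gives the rest.
-/

open Filter Function Set MeasureTheory Topology Complex ComplexConjugate

theorem norm_indicator_one_le {α E : Type*} [SeminormedAddGroup E] [One E] [NormOneClass E]
    (S : Set α) (a : α) : ‖S.indicator (fun _ => (1 : E)) a‖ ≤ 1 :=
  (norm_indicator_le_norm_self _ a).trans norm_one.le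

/-- `BP`: bounded pointwise. -/
structure IsBPClosed (P : (ℝ → ℂ) → Prop) : Prop where
  add : ∀ f g : ℝ → ℂ, Measurable f → Measurable g →
    (∃ C, ∀ s, ‖f s‖ ≤ C) → (∃ C, ∀ s, ‖g s‖ ≤ C) → P f → P g → P (f + g)
  smul : ∀ (c : ℂ) (f : ℝ → ℂ), Measurable f → (∃ C, ∀ s, ‖f s‖ ≤ C) → P f → P (c • f)
  of_tendsto : ∀ (f : ℕ → ℝ → ℂ) (g : ℝ → ℂ) (C : ℝ), (∀ n, Measurable (f n)) →
    Measurable g → (∀ n s, ‖f n s‖ ≤ C) → (∀ s, Tendsto (fun n => f n s) atTop (𝓝 (g s))) →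
    (∀ n, P (f n)) → P g

namespace IsBPClosed

variable {P : (ℝ → ℂ) → Prop}

theorem const (hP : IsBPClosed P) (hexp : ∀ t : ℝ, P (fun s => exp (I * (t * s)))) (c : ℂ) :
    P (fun _ => c) := by
  convert hP.smul c _ (by fun_prop) ⟨1, fun s => by simp⟩ (hexp 0) using 1
  ext s
  simp

theorem comp_addCircle (hP : IsBPClosed P) (hexp : ∀ t : ℝ, P (fun s => exp (I * (t * s))))
    {T : ℝ} [Fact (0 < T)] (g : C(AddCircle T, ℂ)) : P (fun s : ℝ => g s) := by
  have measurable_comp (p : C(AddCircle T, ℂ)) : Measurable (fun s : ℝ => p s) :=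
    (p.continuous.comp (AddCircle.continuous_mk' T)).measurable
  have bounded_comp (p : C(AddCircle T, ℂ)) : ∃ C, ∀ s : ℝ, ‖p s‖ ≤ C :=
    ⟨‖p‖, fun s => p.norm_coe_le_norm _⟩
  have span_fourier : ∀ p ∈ Submodule.span ℂ (range (@fourier T)), P (fun s : ℝ => p s) := by
    intro p hp
    induction hp using Submodule.span_induction with
    | mem q hq =>
      obtain ⟨n, rfl⟩ := hq
      convert hexp (2 * Real.pi * n / T) using 2 with s
      rw [fourier_coe_apply]
      push_cast
      ring_nf
    | zero => exact hP.const hexp 0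
    | add q r _ _ hq hr =>
      exact hP.add _ _ (measurable_comp q) (measurable_comp r) (bounded_comp q) (bounded_comp r)
        hq hr
    | smul c q _ hq => exact hP.smul c _ (measurable_comp q) (bounded_comp q) hq
  have hg : g ∈ closure (Submodule.span ℂ (range (@fourier T)) : Set C(AddCircle T, ℂ)) := by
    rw [← Submodule.topologicalClosure_coe, span_fourier_closure_eq_top]
    trivial
  obtain ⟨u, hu_span, hu_lim⟩ := mem_closure_iff_seq_limit.mp hg
  obtain ⟨N, hN⟩ := Metric.tendsto_atTop.mp hu_lim 1 one_pos
  refine hP.of_tendsto (fun n s => u (n + N) s) _ (‖g‖ + 1) (fun n => measurable_comp _)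
    (measurable_comp g) (fun n s => ?_) (fun s => ?_) (fun n => span_fourier _ (hu_span _))
  · have h1 := norm_sub_norm_le (u (n + N)) g
    have h2 := hN (n + N) (Nat.le_add_left N n)
    rw [dist_eq_norm] at h2
    linarith [(u (n + N)).norm_coe_le_norm s]
  · exact ((continuous_eval_const _).tendsto g).comp (hu_lim.comp (tendsto_add_atTop_nat N))

theorem of_forall_eqOn_Icc (hP : IsBPClosed P) {f : ℝ → ℂ} (hf : Measurable f) {C : ℝ}
    (h : ∀ n : ℕ, ∃ g : ℝ → ℂ, Measurable g ∧ (∀ s, ‖g s‖ ≤ C) ∧ EqOn g f (Icc (-n) n) ∧ P g) :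
    P f := by
  choose g hg hgC hgf hPg using h
  refine hP.of_tendsto g f C hg hf hgC (fun s => tendsto_const_nhds.congr' ?_) hPg
  filter_upwards [eventually_ge_atTop ⌈|s|⌉₊] with n hn
  exact (hgf n (abs_le.mp (Nat.ceil_le.mp hn))).symm

theorem of_hasCompactSupport (hP : IsBPClosed P)
    (hexp : ∀ t : ℝ, P (fun s => exp (I * (t * s)))) {f : ℝ → ℂ} (hf : Continuous f)
    (hfc : HasCompactSupport f) : P f := by
  obtain ⟨C, hC⟩ := hf.bounded_above_of_compact_support hfc
  obtain ⟨R, hR0, hR⟩ := hfc.isCompact.isBounded.subset_closedBall_lt 0 0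
  have hf_zero : ∀ s, R < |s| → f s = 0 := fun s hs =>
    image_eq_zero_of_notMem_tsupport fun h => hs.not_ge (by simpa using hR h)
  refine hP.of_forall_eqOn_Icc hf.measurable (C := C) fun n => ?_
  -- periodize `f` with a period `2 * a` so large that `f` vanishes near `± a`
  set a : ℝ := R + n + 1
  have ha : R < a := by linarith [n.cast_nonneg (α := ℝ)]
  have : Fact (0 < 2 * a) := ⟨by linarith⟩
  have hfa : f (-a) = f (-a + 2 * a) := by
    rw [show -a + 2 * a = a by ring, hf_zero a (by rwa [abs_of_pos (by linarith)]),
      hf_zero (-a) (by rwa [abs_neg, abs_of_pos (by linarith)])]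
  let g : C(AddCircle (2 * a), ℂ) :=
    ⟨AddCircle.liftIco (2 * a) (-a) f, AddCircle.liftIco_continuous hfa hf.continuousOn⟩
  refine ⟨fun s => g s, (g.continuous.comp (AddCircle.continuous_mk' _)).measurable,
    fun s => hC _, fun s hs => AddCircle.liftIco_coe_apply ⟨?_, ?_⟩, hP.comp_addCircle hexp g⟩
  · linarith [hs.1]
  · linarith [hs.2]

theorem of_continuous (hP : IsBPClosed P) (hexp : ∀ t : ℝ, P (fun s => exp (I * (t * s))))
    {f : ℝ → ℂ} (hf : Continuous f) {C : ℝ} (hC : ∀ s, ‖f s‖ ≤ C) : P f := by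
  refine hP.of_forall_eqOn_Icc hf.measurable (C := C) fun n => ?_
  let χ := thickenedIndicator one_pos (Icc (-n : ℝ) n)
  have hχ : Continuous fun s => ((χ s : ℝ) : ℂ) := by fun_prop
  have hχ_supp : HasCompactSupport fun s => ((χ s : ℝ) : ℂ) :=
    HasCompactSupport.intro' (K := Metric.cthickening 1 (Icc (-n : ℝ) n))
      isCompact_Icc.cthickening Metric.isClosed_cthickening fun s hs => by
      simp [χ, thickenedIndicator_zero one_pos _
        fun h => hs (Metric.thickening_subset_cthickening _ _ h)]
  refine ⟨fun s => (χ s : ℂ) * f s, (hχ.mul hf).measurable, fun s => ?_, fun s hs => ?_,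
    hP.of_hasCompactSupport hexp (hχ.mul hf) hχ_supp.mul_right⟩
  · rw [norm_mul]
    refine (mul_le_of_le_one_left (norm_nonneg _) ?_).trans (hC s)
    rw [Complex.norm_real, NNReal.norm_eq]
    exact_mod_cast thickenedIndicator_le_one one_pos _ s
  · simp [χ, thickenedIndicator_one one_pos _ hs]

theorem indicator_of_isClosed (hP : IsBPClosed P)
    (hexp : ∀ t : ℝ, P (fun s => exp (I * (t * s)))) {F : Set ℝ} (hF : IsClosed F) :
    P (F.indicator fun _ => 1) := by
  have hδ (n : ℕ) : (0 : ℝ) < 1 / (n + 1) := Nat.one_div_pos_of_nat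
  let χ (n : ℕ) := thickenedIndicator (hδ n) F
  have hχ (n : ℕ) : Continuous fun s => ((χ n s : ℝ) : ℂ) := by fun_prop
  have hχ_le (n : ℕ) (s : ℝ) : ‖((χ n s : ℝ) : ℂ)‖ ≤ 1 := by
    rw [Complex.norm_real, NNReal.norm_eq]
    exact_mod_cast thickenedIndicator_le_one _ _ s
  have hχ_lim := tendsto_pi_nhds.mp
    (thickenedIndicator_tendsto_indicator_closure hδ tendsto_one_div_add_atTop_nhds_zero_nat F)
  refine hP.of_tendsto (fun n s => (χ n s : ℂ)) _ 1 (fun n => (hχ n).measurable)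
    (measurable_const.indicator hF.measurableSet) hχ_le (fun s => ?_)
    (fun n => hP.of_continuous hexp (hχ n) (hχ_le n))
  have hlim_eq : F.indicator (fun _ => (1 : ℂ)) s =
      ((((closure F).indicator (fun _ => (1 : NNReal)) s : NNReal) : ℝ) : ℂ) := by
    rw [hF.closure_eq]
    by_cases hs : s ∈ F <;> simp [hs]
  rw [hlim_eq]
  exact ((by fun_prop : Continuous fun x : NNReal => ((x : ℝ) : ℂ)).tendsto _).comp (hχ_lim s)

theorem indicator_compl (hP : IsBPClosed P) (hexp : ∀ t : ℝ, P (fun s => exp (I * (t * s))))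
    {B : Set ℝ} (hB : MeasurableSet B) (hPB : P (B.indicator fun _ => 1)) :
    P (Bᶜ.indicator fun _ => 1) := by
  have hcompl : Bᶜ.indicator (fun _ => (1 : ℂ)) =
      (fun _ => 1) + (-1 : ℂ) • B.indicator fun _ => 1 := by
    ext s
    by_cases hs : s ∈ B <;> simp [hs]
  rw [hcompl]
  exact hP.add _ _ measurable_const ((measurable_const.indicator hB).const_smul _)
    ⟨1, fun s => norm_one.le⟩ ⟨1, fun s => by simpa using norm_indicator_one_le B s⟩
    (hP.const hexp 1) (hP.smul _ _ (measurable_const.indicator hB) ⟨1, norm_indicator_one_le B⟩ hPB)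

theorem indicator_iUnion (hP : IsBPClosed P) {B : ℕ → Set ℝ} (hdisj : Pairwise (Disjoint on B))
    (hB : ∀ i, MeasurableSet (B i)) (hPB : ∀ i, P ((B i).indicator fun _ => 1)) :
    P ((⋃ i, B i).indicator fun _ => 1) := by
  have hacc_meas (n : ℕ) : MeasurableSet (accumulate B n) := by
    rw [accumulate_def]
    exact .iUnion fun i => .iUnion fun _ => hB i
  have hacc (n : ℕ) : P ((accumulate B n).indicator fun _ => 1) := by
    induction n with
    | zero => simpa [accumulate_zero_nat] using hPB 0
    | succ n ih =>
      rw [accumulate_succ, indicator_union_of_disjoint (disjoint_accumulate hdisj n.lt_succ_self)]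
      exact hP.add _ _ (measurable_const.indicator (hacc_meas n))
        (measurable_const.indicator (hB _)) ⟨1, norm_indicator_one_le _⟩
        ⟨1, norm_indicator_one_le _⟩ ih (hPB _)
  refine hP.of_tendsto _ _ 1 (fun n => measurable_const.indicator (hacc_meas n))
    (measurable_const.indicator (.iUnion hB)) (fun n => norm_indicator_one_le _) (fun s => ?_) hacc
  rw [tendsto_indicator_const_apply_iff_eventually]
  by_cases hs : s ∈ ⋃ i, B i
  · obtain ⟨i, hi⟩ := mem_iUnion.mp hs
    filter_upwards [eventually_ge_atTop i] with n hn
    exact iff_of_true (mem_accumulate.mpr ⟨i, hn, hi⟩) hs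
  · exact .of_forall fun n => iff_of_false (fun h => hs (accumulate_subset_iUnion n h)) hs

theorem indicator_of_measurableSet (hP : IsBPClosed P)
    (hexp : ∀ t : ℝ, P (fun s => exp (I * (t * s)))) {B : Set ℝ} (hB : MeasurableSet B) :
    P (B.indicator fun _ => 1) := by
  have hborel : (inferInstance : MeasurableSpace ℝ) = .generateFrom {F | IsClosed F} :=
    BorelSpace.measurable_eq.trans borel_eq_generateFrom_isClosed
  induction B, hB using MeasurableSpace.induction_on_inter hborel isPiSystem_isClosed with
  | empty => simpa using hP.const hexp 0
  | basic F hF => exact hP.indicator_of_isClosed hexp hF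
  | compl t ht hPt => exact hP.indicator_compl hexp ht hPt
  | iUnion g hdisj hg hPg => exact hP.indicator_iUnion hdisj hg hPg

theorem of_simpleFunc (hP : IsBPClosed P) (hexp : ∀ t : ℝ, P (fun s => exp (I * (t * s))))
    (g : SimpleFunc ℝ ℂ) : P g := by
  have bounded (g : SimpleFunc ℝ ℂ) : ∃ C, ∀ s, ‖g s‖ ≤ C := (g.map (‖·‖)).exists_forall_le
  induction g using SimpleFunc.induction with
  | @const c B hB =>
    have hpiece : ⇑(SimpleFunc.piecewise B hB (.const ℝ c) (.const ℝ 0)) =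
        c • B.indicator fun _ => 1 := by
      ext s
      by_cases hs : s ∈ B <;> simp [hs]
    rw [hpiece]
    exact hP.smul c _ (measurable_const.indicator hB)
      ⟨1, norm_indicator_one_le B⟩ (hP.indicator_of_measurableSet hexp hB)
  | @add f g _ hf hg =>
    exact hP.add _ _ f.measurable g.measurable (bounded f) (bounded g) hf hg

theorem of_measurable (hP : IsBPClosed P) (hexp : ∀ t : ℝ, P (fun s => exp (I * (t * s))))
    {f : ℝ → ℂ} (hf : Measurable f) (hb : ∃ C, ∀ s, ‖f s‖ ≤ C) : P f := by
  obtain ⟨C, hC⟩ := hb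
  refine hP.of_tendsto (fun n => SimpleFunc.approxOn f hf univ 0 (mem_univ 0) n) f (C + C)
    (fun n => SimpleFunc.measurable _) hf (fun n s => ?_) (fun s => ?_)
    (fun n => hP.of_simpleFunc hexp _)
  · exact (SimpleFunc.norm_approxOn_zero_le hf (mem_univ 0) s n).trans (add_le_add (hC s) (hC s))
  · exact SimpleFunc.tendsto_approxOn hf (mem_univ 0) (subset_closure (mem_univ _))

end IsBPClosed

section Reflection

variable {E : Type*} [NormedAddCommGroup E] [NormedSpace ℂ E]

structure IsBPContinuousLinear (Φ : (ℝ → ℂ) → (E →L[ℂ] E)) : Prop where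
  map_add : ∀ f g : ℝ → ℂ, Measurable f → Measurable g →
    (∃ C, ∀ s, ‖f s‖ ≤ C) → (∃ C, ∀ s, ‖g s‖ ≤ C) → Φ (f + g) = Φ f + Φ g
  map_smul : ∀ (c : ℂ) (f : ℝ → ℂ), Measurable f → (∃ C, ∀ s, ‖f s‖ ≤ C) → Φ (c • f) = c • Φ f
  tendsto_apply : ∀ (f : ℕ → ℝ → ℂ) (g : ℝ → ℂ) (C : ℝ), (∀ n, Measurable (f n)) →
    Measurable g → (∀ n s, ‖f n s‖ ≤ C) → (∀ s, Tendsto (fun n => f n s) atTop (𝓝 (g s))) →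
    ∀ x, Tendsto (fun n => Φ (f n) x) atTop (𝓝 (Φ g x))

/-- `f(-A) = J f̄(A) J`, for `Φ` the functional calculus of `A`. -/
def IsReflectionSymmetric (J : E → E) (Φ : (ℝ → ℂ) → (E →L[ℂ] E)) (f : ℝ → ℂ) : Prop :=
  ∀ x, Φ (fun s => f (-s)) x = J (Φ (fun s => conj (f s)) (J x))

theorem isReflectionSymmetric_exp {J : E → E} {Φ : (ℝ → ℂ) → (E →L[ℂ] E)}
    (hU : ∀ (t : ℝ) (x : E),
      J (Φ (fun s => exp (I * (t * s))) (J x)) = Φ (fun s => exp (I * (t * s))) x)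
    (t : ℝ) : IsReflectionSymmetric J Φ (fun s => exp (I * (t * s))) := by
  intro x
  have hneg : (fun s : ℝ => exp (I * (t * ↑(-s)))) = fun s : ℝ => exp (I * (↑(-t) * s)) := by
    ext s
    push_cast
    ring_nf
  have hconj : (fun s : ℝ => conj (exp (I * (t * s)))) = fun s : ℝ => exp (I * (↑(-t) * s)) := by
    ext s
    rw [← exp_conj]
    simp only [map_mul, conj_I, conj_ofReal]
    push_cast
    ring_nf
  simp only [hneg, hconj, hU]

theorem isBPClosed_isReflectionSymmetric (J : E →ₗᵢ⋆[ℂ] E) {Φ : (ℝ → ℂ) → (E →L[ℂ] E)}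
    (hΦ : IsBPContinuousLinear Φ) : IsBPClosed (IsReflectionSymmetric J Φ) := by
  have measurable_neg {f : ℝ → ℂ} (hf : Measurable f) : Measurable fun s => f (-s) :=
    hf.comp measurable_neg
  have measurable_conj {f : ℝ → ℂ} (hf : Measurable f) : Measurable fun s => conj (f s) :=
    continuous_conj.measurable.comp hf
  have bounded_neg {f : ℝ → ℂ} {C : ℝ} (hC : ∀ s, ‖f s‖ ≤ C) : ∀ s, ‖f (-s)‖ ≤ C :=
    fun s => hC (-s)
  have bounded_conj {f : ℝ → ℂ} {C : ℝ} (hC : ∀ s, ‖f s‖ ≤ C) : ∀ s, ‖conj (f s)‖ ≤ C :=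
    fun s => by simpa using hC s
  refine ⟨fun f g hf hg ⟨Cf, hCf⟩ ⟨Cg, hCg⟩ hPf hPg x => ?_,
    fun c f hf ⟨C, hC⟩ hPf x => ?_, fun f g C hf hg hfC hfg hPf x => ?_⟩
  · have hconj : (fun s => conj ((f + g) s)) = (fun s => conj (f s)) + fun s => conj (g s) := by
      ext s
      simp
    change Φ ((fun s => f (-s)) + fun s => g (-s)) x = _
    rw [hconj, hΦ.map_add _ _ (measurable_neg hf) (measurable_neg hg) ⟨Cf, bounded_neg hCf⟩
      ⟨Cg, bounded_neg hCg⟩, hΦ.map_add _ _ (measurable_conj hf) (measurable_conj hg)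
      ⟨Cf, bounded_conj hCf⟩ ⟨Cg, bounded_conj hCg⟩]
    simp only [add_apply, map_add, hPf x, hPg x]
  · have hconj : (fun s => conj ((c • f) s)) = conj c • fun s => conj (f s) := by
      ext s
      simp
    change Φ (c • fun s => f (-s)) x = _
    rw [hconj, hΦ.map_smul _ _ (measurable_neg hf) ⟨C, bounded_neg hC⟩,
      hΦ.map_smul _ _ (measurable_conj hf) ⟨C, bounded_conj hC⟩]
    simp only [smul_apply, LinearIsometry.map_smulₛₗ, conj_conj, hPf x]
  · have hlim_neg := hΦ.tendsto_apply _ _ C (fun n => measurable_neg (hf n)) (measurable_neg hg)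
      (fun n => bounded_neg (hfC n)) (fun s => hfg (-s)) x
    have hlim_conj := hΦ.tendsto_apply _ _ C (fun n => measurable_conj (hf n)) (measurable_conj hg)
      (fun n => bounded_conj (hfC n)) (fun s => (continuous_conj.tendsto _).comp (hfg s)) (J x)
    exact tendsto_nhds_unique hlim_neg <|
      ((J.continuous.tendsto _).comp hlim_conj).congr fun n => (hPf n x).symm

end Reflection

theorem stmt0_general {H : Type*} [NormedAddCommGroup H] [InnerProductSpace ℂ H]
    (J : H → H)
    (hJadd : ∀ x y, J (x + y) = J x + J y)
    (hJsmul : ∀ (c : ℂ) (x : H), J (c • x) = (starRingEnd ℂ c) • J x)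
    (hJinner : ∀ x y, (inner ℂ (J x) (J y) : ℂ) = inner ℂ y x)
    -- `Φ` is the bounded Borel functional calculus of the self-adjoint operator `A`
    (Φ : (ℝ → ℂ) → (H →L[ℂ] H))
    (hΦadd : ∀ f g : ℝ → ℂ, Measurable f → Measurable g →
      (∃ C, ∀ s, ‖f s‖ ≤ C) → (∃ C, ∀ s, ‖g s‖ ≤ C) →
      Φ (f + g) = Φ f + Φ g)
    (hΦsmul : ∀ (c : ℂ) (f : ℝ → ℂ), Measurable f → (∃ C, ∀ s, ‖f s‖ ≤ C) →
      Φ (c • f) = c • Φ f)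
    -- dominated convergence for the functional calculus
    (hΦcont : ∀ (f : ℕ → ℝ → ℂ) (g : ℝ → ℂ) (C : ℝ), (∀ n, Measurable (f n)) →
      Measurable g → (∀ n s, ‖f n s‖ ≤ C) →
      (∀ s, Filter.Tendsto (fun n => f n s) Filter.atTop (nhds (g s))) →
      ∀ x, Filter.Tendsto (fun n => Φ (f n) x) Filter.atTop (nhds (Φ g x)))
    -- hypothesis: `J e^{itA} J = e^{itA}` for all `t ∈ ℝ`
    (hU : ∀ (t : ℝ) (x : H),
      J (Φ (fun s => Complex.exp (Complex.I * ((t : ℂ) * (s : ℂ)))) (J x)) =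
        Φ (fun s => Complex.exp (Complex.I * ((t : ℂ) * (s : ℂ)))) x) :
    (∀ f : ℝ → ℂ, Measurable f → (∃ C, ∀ s, ‖f s‖ ≤ C) →
      ∀ x, Φ (fun s => f (-s)) x = J (Φ (fun s => starRingEnd ℂ (f s)) (J x))) ∧
    (∀ B : Set ℝ, MeasurableSet B →
      ∀ x, Φ (Set.indicator (-B) (fun _ => (1 : ℂ))) x =
        J (Φ (Set.indicator B (fun _ => (1 : ℂ))) (J x))) := by
  let Jₗ : H →ₗᵢ⋆[ℂ] H :=
    { toFun := J
      map_add' := hJadd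
      map_smul' := hJsmul
      norm_map' := fun x => show ‖J x‖ = ‖x‖ by
        rw [@norm_eq_sqrt_re_inner ℂ, hJinner, ← @norm_eq_sqrt_re_inner ℂ] }
  have hsym : ∀ f : ℝ → ℂ, Measurable f → (∃ C, ∀ s, ‖f s‖ ≤ C) → IsReflectionSymmetric J Φ f :=
    fun f hf hb => (isBPClosed_isReflectionSymmetric Jₗ ⟨hΦadd, hΦsmul, hΦcont⟩).of_measurable
      (isReflectionSymmetric_exp hU) hf hb
  refine ⟨hsym, fun B hB x => ?_⟩
  have h := hsym _ (measurable_const.indicator hB)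
    ⟨1, norm_indicator_one_le B⟩ x
  have hneg : (fun s => B.indicator (fun _ => (1 : ℂ)) (-s)) = (-B).indicator fun _ => 1 := by
    ext s
    by_cases hs : -s ∈ B <;> simp [hs]
  have hconj : (fun s => conj (B.indicator (fun _ => (1 : ℂ)) s)) = B.indicator fun _ => 1 := by
    ext s
    by_cases hs : s ∈ B <;> simp [hs]
  rwa [hneg, hconj] at h

theorem stmt0 {H : Type*} [NormedAddCommGroup H] [InnerProductSpace ℂ H] [CompleteSpace H]
    (J : H → H)
    (hJadd : ∀ x y, J (x + y) = J x + J y)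
    (hJsmul : ∀ (c : ℂ) (x : H), J (c • x) = (starRingEnd ℂ c) • J x)
    (hJinner : ∀ x y, (inner ℂ (J x) (J y) : ℂ) = inner ℂ y x)
    (hJinv : ∀ x, J (J x) = x)
    -- `Φ` is the bounded Borel functional calculus of the self-adjoint operator `A`
    (Φ : (ℝ → ℂ) → (H →L[ℂ] H))
    (hΦadd : ∀ f g : ℝ → ℂ, Measurable f → Measurable g →
      (∃ C, ∀ s, ‖f s‖ ≤ C) → (∃ C, ∀ s, ‖g s‖ ≤ C) →
      Φ (f + g) = Φ f + Φ g)
    (hΦsmul : ∀ (c : ℂ) (f : ℝ → ℂ), Measurable f → (∃ C, ∀ s, ‖f s‖ ≤ C) →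
      Φ (c • f) = c • Φ f)
    -- dominated convergence for the functional calculus
    (hΦcont : ∀ (f : ℕ → ℝ → ℂ) (g : ℝ → ℂ) (C : ℝ), (∀ n, Measurable (f n)) →
      Measurable g → (∀ n s, ‖f n s‖ ≤ C) →
      (∀ s, Filter.Tendsto (fun n => f n s) Filter.atTop (nhds (g s))) →
      ∀ x, Filter.Tendsto (fun n => Φ (f n) x) Filter.atTop (nhds (Φ g x)))
    -- hypothesis: `J e^{itA} J = e^{itA}` for all `t ∈ ℝ`
    (hU : ∀ (t : ℝ) (x : H),
      J (Φ (fun s => Complex.exp (Complex.I * ((t : ℂ) * (s : ℂ)))) (J x)) =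
        Φ (fun s => Complex.exp (Complex.I * ((t : ℂ) * (s : ℂ)))) x) :
    (∀ f : ℝ → ℂ, Measurable f → (∃ C, ∀ s, ‖f s‖ ≤ C) →
      ∀ x, Φ (fun s => f (-s)) x = J (Φ (fun s => starRingEnd ℂ (f s)) (J x))) ∧
    (∀ B : Set ℝ, MeasurableSet B →
      ∀ x, Φ (Set.indicator (-B) (fun _ => (1 : ℂ))) x =
        J (Φ (Set.indicator B (fun _ => (1 : ℂ))) (J x))) :=
  stmt0_general J hJadd hJsmul hJinner Φ hΦadd hΦsmul hΦcont hU
end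

section
/- Let T be a twist on H ⊗ H with P_{T,n} ≥ 0 for all n. For ξ ∈ H and η ∈ H^{⊗n}, one has ⟨ξ ⊗ η, P_{T,n+1}(ξ ⊗ η)⟩ ≤ (Σ_{k=0}^{n} ‖T‖^k) ‖ξ‖² ⟨η, P_{T,n} η⟩. Consequently, the creation operator a*(ξ) : η ↦ ξ ⊗ η extends to a bounded operator from the Hilbert space completion of (H^{⊗n}, ⟨·, P_{T,n} ·⟩) to that of (H^{⊗(n+1)}, ⟨·, P_{T,n+1} ·⟩) with norm at most (Σ_{k=0}^{n} ‖T‖^k)^{1/2} ‖ξ‖. -/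
/-!
STATEMENT 5: Let `T` be a twist on `H ⊗ H` (all `P_{T,n} ≥ 0`).  For `ξ ∈ H` and
`η ∈ H^{⊗n}`, `⟨ξ ⊗ η, P_{T,n+1}(ξ ⊗ η)⟩ ≤ (Σ_{k=0}^n ‖T‖^k) ‖ξ‖² ⟨η, P_{T,n} η⟩`.
Consequently the creation operator `a*(ξ) : η ↦ ξ ⊗ η` is bounded from the twisted
`n`-particle space to the twisted `(n+1)`-particle space with norm at most
`(Σ_{k=0}^n ‖T‖^k)^{1/2} ‖ξ‖` (second conclusion, stated on the defining seminorms).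
Here `tens n ξ η = ξ ⊗ η : H ⊗ H^{⊗n} = H^{⊗(n+1)}` and `amp n = 1 ⊗ ·`.
-/

noncomputable section

variable {E : ℕ → Type*} [∀ n, NormedAddCommGroup (E n)] [∀ n, InnerProductSpace ℂ (E n)]
  [∀ n, CompleteSpace (E n)]

/-- `chainT T n k = T₁ T₂ ⋯ T_k`. -/
def chainT (T : ∀ n, ℕ → (E n →L[ℂ] E n)) (n : ℕ) : ℕ → (E n →L[ℂ] E n)
  | 0 => 1
  | k + 1 => chainT T n k * T n (k + 1)

/-- `Rop T n = 1 + T₁ + T₁T₂ + ⋯ + T₁⋯T_{n-1}`. -/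
def Rop (T : ∀ n, ℕ → (E n →L[ℂ] E n)) (n : ℕ) : E n →L[ℂ] E n :=
  ∑ k ∈ Finset.range n, chainT T n k

/-- `P_{T,1} = 1`, `P_{T,n+1} = (1 ⊗ P_{T,n}) R_{T,n+1}`. -/
def Pop (T : ∀ n, ℕ → (E n →L[ℂ] E n))
    (amp : ∀ n, (E n →L[ℂ] E n) →⋆ₐ[ℂ] (E (n + 1) →L[ℂ] E (n + 1))) :
    ∀ n, E n →L[ℂ] E n
  | 0 => 1
  | n + 1 => amp n (Pop T amp n) * Rop T (n + 1)

/-!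
Write `P_{T,n+1} = Q R` with `Q = 1 ⊗ P_{T,n} ≥ 0` and `R = R_{T,n+1}`, so that
`‖R‖ ≤ Σ_{k ≤ n} ‖T‖^k`. Since `Q R` is self-adjoint, `R` is symmetric for the semi-inner product
`⟪·, Q ·⟫`, hence by Cauchy–Schwarz the `Q`-seminorms `u k` of `R^k x` form a log-convex sequence.
Log-convexity together with the geometric growth `u k = O(‖R‖^k)` forces `u 1 ≤ ‖R‖ u 0`, and so
`⟪x, Q R x⟫ ≤ u 0 * u 1 ≤ ‖R‖ ⟪x, Q x⟫`. At `x = ξ ⊗ η` one has `⟪x, Q x⟫ = ‖ξ‖² ⟪η, P_{T,n} η⟫`.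
-/

open Filter Topology in
theorem le_of_forall_pow_le_mul_pow {a b C : ℝ} (hb : 0 ≤ b) (h : ∀ k : ℕ, a ^ k ≤ C * b ^ k) :
    a ≤ b := by
  by_contra! hba
  have ha : 0 < a := hb.trans_lt hba
  have hlim : Tendsto (fun k : ℕ => C * (b / a) ^ k) atTop (𝓝 0) := by
    simpa using (tendsto_pow_atTop_nhds_zero_of_lt_one (div_nonneg hb ha.le)
      ((div_lt_one ha).mpr hba)).const_mul C
  obtain ⟨k, hk⟩ := (hlim.eventually (gt_mem_nhds one_pos)).exists
  rw [div_pow, mul_div_assoc', div_lt_one (pow_pos ha k)] at hk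
  linarith [h k]

section LogConvex

variable {u : ℕ → ℝ}

theorem mul_le_mul_succ_of_sq_le (hu : ∀ k, 0 ≤ u k)
    (hconv : ∀ k, u (k + 1) ^ 2 ≤ u k * u (k + 2)) (k : ℕ) : u 1 * u k ≤ u 0 * u (k + 1) := by
  induction k with
  | zero => rw [mul_comm]
  | succ k ih =>
    rcases (hu (k + 1)).eq_or_lt with h0 | h0
    · rw [← h0, mul_zero]
      exact mul_nonneg (hu 0) (hu (k + 2))
    · refine le_of_mul_le_mul_right ?_ h0
      nlinarith [mul_le_mul_of_nonneg_left (hconv k) (hu 1),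
        mul_le_mul_of_nonneg_right ih (hu (k + 2))]

theorem pow_mul_le_pow_mul_of_sq_le (hu : ∀ k, 0 ≤ u k)
    (hconv : ∀ k, u (k + 1) ^ 2 ≤ u k * u (k + 2)) (k : ℕ) : u 1 ^ k * u 0 ≤ u 0 ^ k * u k := by
  induction k with
  | zero => simp
  | succ k ih =>
    calc u 1 ^ (k + 1) * u 0 = u 1 * (u 1 ^ k * u 0) := by ring
      _ ≤ u 1 * (u 0 ^ k * u k) := mul_le_mul_of_nonneg_left ih (hu 1)
      _ = u 0 ^ k * (u 1 * u k) := by ring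
      _ ≤ u 0 ^ k * (u 0 * u (k + 1)) :=
        mul_le_mul_of_nonneg_left (mul_le_mul_succ_of_sq_le hu hconv k) (pow_nonneg (hu 0) k)
      _ = u 0 ^ (k + 1) * u (k + 1) := by ring

theorem le_mul_of_sq_le_of_le_mul_pow (hu : ∀ k, 0 ≤ u k)
    (hconv : ∀ k, u (k + 1) ^ 2 ≤ u k * u (k + 2)) {M c : ℝ} (hc : 0 ≤ c)
    (hgrowth : ∀ k, u k ≤ M * c ^ k) : u 1 ≤ c * u 0 := by
  rcases (hu 0).eq_or_lt with h0 | h0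
  · have h1 : u 1 ^ 2 ≤ 0 := by simpa [← h0] using hconv 0
    rw [← h0, mul_zero, ← sq_eq_zero_iff.mp (le_antisymm h1 (sq_nonneg _))]
  · refine le_of_forall_pow_le_mul_pow (C := M / u 0) (mul_nonneg hc h0.le) fun k => ?_
    rw [mul_pow, div_mul_eq_mul_div, le_div_iff₀ h0]
    calc u 1 ^ k * u 0 ≤ u 0 ^ k * u k := pow_mul_le_pow_mul_of_sq_le hu hconv k
      _ ≤ u 0 ^ k * (M * c ^ k) := mul_le_mul_of_nonneg_left (hgrowth k) (pow_nonneg h0.le k)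
      _ = M * (c ^ k * u 0 ^ k) := by ring

end LogConvex

namespace ContinuousLinearMap

variable {F : Type*} [NormedAddCommGroup F] [InnerProductSpace ℂ F] [CompleteSpace F]

theorem IsPositive.exists_inner_eq_inner {Q : F →L[ℂ] F} (hQ : Q.IsPositive) :
    ∃ s : F →L[ℂ] F, ∀ x y, inner ℂ x (Q y) = inner ℂ (s x) (s y) := by
  obtain ⟨s, rfl⟩ := CStarAlgebra.nonneg_iff_eq_star_mul_self.mp ((nonneg_iff_isPositive Q).mpr hQ)
  exact ⟨s, fun x y => by rw [star_eq_adjoint, mul_apply_eq_comp, adjoint_inner_right]⟩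

theorem re_inner_mul_apply_le {Q R : F →L[ℂ] F} (hQ : Q.IsPositive) (hQR : IsSelfAdjoint (Q * R))
    {c : ℝ} (hR : ‖R‖ ≤ c) (x : F) :
    (inner ℂ x ((Q * R) x)).re ≤ c * (inner ℂ x (Q x)).re := by
  obtain ⟨s, hs⟩ := hQ.exists_inner_eq_inner
  set u : ℕ → ℝ := fun k => ‖s (R^[k] x)‖
  have hre_le (y z : F) : (inner ℂ (s y) (s z)).re ≤ ‖s y‖ * ‖s z‖ :=
    (Complex.re_le_norm _).trans (norm_inner_le_norm _ _)
  have hnorm_sq (y : F) : ‖s y‖ ^ 2 = (inner ℂ (s y) (s y)).re :=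
    (inner_self_eq_norm_sq (𝕜 := ℂ) _).symm
  have hsymm (y z : F) : inner ℂ (R y) (Q z) = inner ℂ y (Q (R z)) :=
    calc inner ℂ (R y) (Q z) = inner ℂ ((Q * R) y) z := (hQ.isSymmetric _ _).symm
      _ = inner ℂ y ((Q * R) z) := hQR.isSymmetric _ _
  have hconv (k : ℕ) : u (k + 1) ^ 2 ≤ u k * u (k + 2) := by
    calc u (k + 1) ^ 2 = (inner ℂ (s (R^[k] x)) (s (R^[k + 2] x))).re := by
          simp only [u, hnorm_sq, ← hs, Function.iterate_succ_apply', hsymm]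
      _ ≤ u k * u (k + 2) := hre_le _ _
  have hgrowth (k : ℕ) : u k ≤ ‖s‖ * ‖x‖ * c ^ k := by
    have hRk : ‖R^[k] x‖ ≤ c ^ k * ‖x‖ := by
      induction k with
      | zero => simp
      | succ k ih =>
        rw [Function.iterate_succ_apply', pow_succ', mul_assoc]
        exact (R.le_opNorm _).trans (mul_le_mul hR ih (norm_nonneg _) ((norm_nonneg R).trans hR))
    calc u k ≤ ‖s‖ * ‖R^[k] x‖ := s.le_opNorm _
      _ ≤ ‖s‖ * ‖x‖ * c ^ k := by
        rw [mul_assoc, mul_comm ‖x‖]; exact mul_le_mul_of_nonneg_left hRk (norm_nonneg s)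
  have hu1 : u 1 ≤ c * u 0 := le_mul_of_sq_le_of_le_mul_pow (fun k => norm_nonneg _) hconv
    ((norm_nonneg R).trans hR) hgrowth
  calc (inner ℂ x ((Q * R) x)).re = (inner ℂ (s x) (s (R x))).re := by
        rw [mul_apply_eq_comp, hs]
    _ ≤ u 0 * u 1 := hre_le _ _
    _ ≤ ‖s x‖ * (c * ‖s x‖) := mul_le_mul_of_nonneg_left hu1 (norm_nonneg _)
    _ = c * ‖s x‖ ^ 2 := by ring
    _ = c * (inner ℂ x (Q x)).re := by rw [hs, hnorm_sq]

end ContinuousLinearMap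

section Twist

variable {T : ∀ n, ℕ → (E n →L[ℂ] E n)} {n : ℕ} {q : ℝ}

theorem norm_chainT_le (hq0 : 0 ≤ q) (hT : ∀ k, 1 ≤ k → k ≤ n - 1 → ‖T n k‖ ≤ q) :
    ∀ k < n, ‖chainT T n k‖ ≤ q ^ k
  | 0, _ => by simpa [chainT, ContinuousLinearMap.one_def] using ContinuousLinearMap.norm_id_le
  | k + 1, hk =>
    calc ‖chainT T n k * T n (k + 1)‖ ≤ ‖chainT T n k‖ * ‖T n (k + 1)‖ := norm_mul_le _ _
      _ ≤ q ^ k * q :=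
        mul_le_mul (norm_chainT_le hq0 hT k (by omega)) (hT (k + 1) (by omega) (by omega))
          (norm_nonneg _) (pow_nonneg hq0 k)
      _ = q ^ (k + 1) := (pow_succ q k).symm

theorem norm_Rop_le (hq0 : 0 ≤ q) (hT : ∀ k, 1 ≤ k → k ≤ n - 1 → ‖T n k‖ ≤ q) :
    ‖Rop T n‖ ≤ ∑ k ∈ Finset.range n, q ^ k :=
  (norm_sum_le _ _).trans <| Finset.sum_le_sum fun k hk =>
    norm_chainT_le hq0 hT k (Finset.mem_range.mp hk)

end Twist

theorem stmt5_general {H : Type*} [NormedAddCommGroup H] [InnerProductSpace ℂ H]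
    (T : ∀ n, ℕ → (E n →L[ℂ] E n))
    (amp : ∀ n, (E n →L[ℂ] E n) →⋆ₐ[ℂ] (E (n + 1) →L[ℂ] E (n + 1)))
    -- the elementary tensor map `tens n ξ η = ξ ⊗ η ∈ H^{⊗(n+1)}`
    (tens : ∀ n, H →ₗ[ℂ] E n →ₗ[ℂ] E (n + 1))
    (htinner : ∀ n (ξ ξ' : H) (η η' : E n),
      (inner ℂ (tens n ξ η) (tens n ξ' η') : ℂ) = (inner ℂ ξ ξ' : ℂ) * (inner ℂ η η' : ℂ))
    (htamp : ∀ n (A : E n →L[ℂ] E n) (ξ : H) (η : E n),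
      amp n A (tens n ξ η) = tens n ξ (A η))
    (q : ℝ) (hq0 : 0 ≤ q)
    -- `q = ‖T‖`
    (hqnorm : ∀ n k, 1 ≤ k → k ≤ n - 1 → ‖T n k‖ ≤ q)
    -- `T` is a twist: all `P_{T,n}` are positive
    (hpos : ∀ n, (Pop T amp n).IsPositive) :
    ∀ n (ξ : H) (η : E n),
      (inner ℂ (tens n ξ η) (Pop T amp (n + 1) (tens n ξ η)) : ℂ).re ≤
        (∑ k ∈ Finset.range (n + 1), q ^ k) * ‖ξ‖ ^ 2 *
          (inner ℂ η (Pop T amp n η) : ℂ).re ∧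
      Real.sqrt ((inner ℂ (tens n ξ η) (Pop T amp (n + 1) (tens n ξ η)) : ℂ).re) ≤
        Real.sqrt (∑ k ∈ Finset.range (n + 1), q ^ k) * ‖ξ‖ *
          Real.sqrt ((inner ℂ η (Pop T amp n η) : ℂ).re) := by
  intro n ξ η
  have hc0 : 0 ≤ ∑ k ∈ Finset.range (n + 1), q ^ k :=
    Finset.sum_nonneg fun k _ => pow_nonneg hq0 k
  have hQ : (amp n (Pop T amp n)).IsPositive :=
    (ContinuousLinearMap.nonneg_iff_isPositive _).mp
      (map_nonneg (amp n) ((ContinuousLinearMap.nonneg_iff_isPositive _).mpr (hpos n)))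
  have hinner_amp : (inner ℂ (tens n ξ η) (amp n (Pop T amp n) (tens n ξ η))).re =
      ‖ξ‖ ^ 2 * (inner ℂ η (Pop T amp n η)).re := by
    rw [htamp, htinner, inner_self_eq_norm_sq_to_K]
    exact_mod_cast Complex.re_ofReal_mul _ _
  have hmain := ContinuousLinearMap.re_inner_mul_apply_le hQ (hpos (n + 1)).isSelfAdjoint
    (norm_Rop_le hq0 (hqnorm (n + 1))) (tens n ξ η)
  rw [hinner_amp, ← mul_assoc] at hmain
  refine ⟨hmain, ?_⟩
  rw [← Real.sqrt_sq (norm_nonneg ξ), ← Real.sqrt_mul hc0, ← Real.sqrt_mul (by positivity)]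
  exact Real.sqrt_le_sqrt hmain

theorem stmt5 {H : Type*} [NormedAddCommGroup H] [InnerProductSpace ℂ H] [CompleteSpace H]
    (T : ∀ n, ℕ → (E n →L[ℂ] E n))
    (amp : ∀ n, (E n →L[ℂ] E n) →⋆ₐ[ℂ] (E (n + 1) →L[ℂ] E (n + 1)))
    (hamp : ∀ n k, 1 ≤ k → k ≤ n - 1 → amp n (T n k) = T (n + 1) (k + 1))
    (hsa : ∀ n k, 1 ≤ k → k ≤ n - 1 → IsSelfAdjoint (T n k))
    -- the elementary tensor map `tens n ξ η = ξ ⊗ η ∈ H^{⊗(n+1)}`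
    (tens : ∀ n, H →ₗ[ℂ] E n →ₗ[ℂ] E (n + 1))
    (htinner : ∀ n (ξ ξ' : H) (η η' : E n),
      (inner ℂ (tens n ξ η) (tens n ξ' η') : ℂ) = (inner ℂ ξ ξ' : ℂ) * (inner ℂ η η' : ℂ))
    (htamp : ∀ n (A : E n →L[ℂ] E n) (ξ : H) (η : E n),
      amp n A (tens n ξ η) = tens n ξ (A η))
    (q : ℝ) (hq0 : 0 ≤ q)
    -- `q = ‖T‖`
    (hqnorm : ∀ n k, 1 ≤ k → k ≤ n - 1 → ‖T n k‖ ≤ q)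
    -- `T` is a twist: all `P_{T,n}` are positive
    (hpos : ∀ n, (Pop T amp n).IsPositive) :
    ∀ n (ξ : H) (η : E n),
      (inner ℂ (tens n ξ η) (Pop T amp (n + 1) (tens n ξ η)) : ℂ).re ≤
        (∑ k ∈ Finset.range (n + 1), q ^ k) * ‖ξ‖ ^ 2 *
          (inner ℂ η (Pop T amp n η) : ℂ).re ∧
      Real.sqrt ((inner ℂ (tens n ξ η) (Pop T amp (n + 1) (tens n ξ η)) : ℂ).re) ≤
        Real.sqrt (∑ k ∈ Finset.range (n + 1), q ^ k) * ‖ξ‖ *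
          Real.sqrt ((inner ℂ η (Pop T amp n η) : ℂ).re) :=
  stmt5_general T amp tens htinner htamp q hq0 hqnorm hpos

end
end

section
/- Let s be a densely defined symmetric operator on a Hilbert space K, and let (K_n)_{n≥0} be an increasing sequence of closed subspaces with dense union such that s maps K_n into K_{n+1} and ‖s η‖ ≤ C(n+1)‖η‖ for all η ∈ K_n. Then every vector in ∪_n K_n is analytic for s, and s is essentially self-adjoint on ∪_n K_n. -/
/-!
For `η ∈ K_n` the iterates `sᵏ η` stay in `K_{n+k}`, whence `‖sᵏ η‖ ≤ Cᵏ (n+k)!/n! ‖η‖`, and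
`(n+k)! ≤ 2ⁿ⁺ᵏ n! k!` makes `η` an analytic vector.

Nelson's theorem is then proved directly for the closure `A` of the restriction of `s`. Let
`v ⊥ ran (A - μ)` with `Im μ ≠ 0` and let `x` be analytic. For small `|t|` the series
`e^{itA} x = ∑ (it)ʲ/j! Aʲ x` converges, stays in the domain of the closed operator `A`, preserves
norms (symmetry turns `⟪Aʲ x, Aˡ x⟫` into `⟪x, A^{j+l} x⟫`, and the coefficients of `e^{-it} e^{it}`
vanish in positive degree), and `⟪v, e^{itA} x⟫ = e^{itμ} ⟪v, x⟫`. Iterating the flow keeps the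
norms, hence the radius of convergence, while `|e^{itμ}|ᵐ → ∞` for the right sign of `t`; so
`⟪v, x⟫ = 0`. Analytic vectors being dense, `ran (A ∓ i)` are dense, and `ran (A - i)` is also
closed since `‖(A - i) x‖² = ‖A x‖² + ‖x‖²`; this forces `A† = A`.
-/

open Complex Finset
open scoped ComplexConjugate InnerProductSpace Nat

theorem Nat.add_factorial_le_two_pow_mul (n k : ℕ) : (n + k)! ≤ 2 ^ (n + k) * (n ! * k !) := by
  rw [← Nat.add_choose_mul_factorial_mul_factorial, mul_assoc]
  exact Nat.mul_le_mul_right _ (Nat.choose_le_two_pow _ _)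

theorem Finset.sum_antidiagonal_pow_div_factorial {𝕜 : Type*} [Field 𝕜] [CharZero 𝕜]
    (x y : 𝕜) (n : ℕ) :
    ∑ p ∈ antidiagonal n, x ^ p.1 / (p.1 ! : 𝕜) * (y ^ p.2 / (p.2 ! : 𝕜)) = (x + y) ^ n / n ! := by
  rw [(Commute.all x y).add_pow', Finset.sum_div]
  refine Finset.sum_congr rfl fun ⟨j, l⟩ hp => ?_
  rw [← HasAntidiagonal.mem_antidiagonal.mp hp, nsmul_eq_mul, Nat.cast_add_choose]
  field_simp [(j + l).factorial_ne_zero]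

theorem tsum_eq_tsum_sum_antidiagonal {E : Type*} [NormedAddCommGroup E] [CompleteSpace E]
    {f : ℕ × ℕ → E} (hf : Summable f) :
    ∑' p, f p = ∑' n, ∑ p ∈ antidiagonal n, f p := by
  let e := HasAntidiagonal.sigmaAntidiagonalEquivProd (A := ℕ)
  rw [← e.tsum_eq]
  change ∑' c, (f ∘ e) c = _
  rw [(e.summable_iff.mpr hf).tsum_sigma]
  simp [tsum_fintype, e, Finset.sum_attach _ (fun p => f p)]

section

variable {K : Type*} [NormedAddCommGroup K] [InnerProductSpace ℂ K]

theorem norm_sub_I_smul_sq {x y : K} (h : ⟪y, x⟫_ℂ = ⟪x, y⟫_ℂ) :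
    ‖y - I • x‖ ^ 2 = ‖y‖ ^ 2 + ‖x‖ ^ 2 := by
  have hre : RCLike.re ⟪y, I • x⟫_ℂ = 0 := by
    have : (⟪y, x⟫_ℂ).im = 0 := by rw [← conj_eq_iff_im, inner_conj_symm, h]
    simp [this]
  rw [@norm_sub_sq ℂ, hre, norm_smul, norm_I, one_mul]
  ring

theorem inner_tsum_tsum_eq_tsum_antidiagonal [CompleteSpace K] {x y : ℕ → K}
    (hx : Summable (‖x ·‖)) (hy : Summable (‖y ·‖)) :
    ⟪∑' j, x j, ∑' l, y l⟫_ℂ = ∑' n, ∑ p ∈ antidiagonal n, ⟪x p.1, y p.2⟫_ℂ := by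
  have hF : Summable fun p : ℕ × ℕ => ⟪x p.1, y p.2⟫_ℂ :=
    (hx.mul_of_nonneg hy (fun _ => norm_nonneg _) fun _ => norm_nonneg _).of_norm_bounded
      fun p => norm_inner_le_norm _ _
  have hrow : ∀ j, ∑' l, ⟪x j, y l⟫_ℂ = ⟪x j, ∑' l, y l⟫_ℂ := fun j =>
    (hy.of_norm.hasSum.mapL (innerSL ℂ (x j))).tsum_eq
  have hcol : ∑' j, ⟪x j, ∑' l, y l⟫_ℂ = ⟪∑' j, x j, ∑' l, y l⟫_ℂ :=
    (hx.of_norm.hasSum.mapL (innerSLFlip ℂ (∑' l, y l))).tsum_eq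
  rw [← tsum_eq_tsum_sum_antidiagonal hF, hF.tsum_prod, ← hcol]
  exact tsum_congr fun j => (hrow j).symm

namespace LinearPMap

theorem isFormalAdjoint_self_iff {A : K →ₗ.[ℂ] K} :
    A.IsFormalAdjoint A ↔ ∀ p ∈ A.graph, ∀ q ∈ A.graph, ⟪p.2, q.1⟫_ℂ = ⟪p.1, q.2⟫_ℂ := by
  refine ⟨fun h p hp q hq => ?_, fun h x y => h _ (A.mem_graph x) _ (A.mem_graph y)⟩
  obtain ⟨x, hx1, hx2⟩ := A.mem_graph_iff.mp hp
  obtain ⟨y, hy1, hy2⟩ := A.mem_graph_iff.mp hq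
  rw [← hx1, ← hx2, ← hy1, ← hy2]
  exact h x y

theorem IsFormalAdjoint.of_le {T A : K →ₗ.[ℂ] K} (hA : A.IsFormalAdjoint A) (h : T ≤ A) :
    T.IsFormalAdjoint T := by
  rw [isFormalAdjoint_self_iff] at hA ⊢
  exact fun p hp q hq => hA p (le_graph_of_le h hp) q (le_graph_of_le h hq)

theorem IsFormalAdjoint.closure {T : K →ₗ.[ℂ] K} (hT : T.IsFormalAdjoint T) (hc : T.IsClosable) :
    T.closure.IsFormalAdjoint T.closure := by
  rw [isFormalAdjoint_self_iff] at hT ⊢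
  intro p hp q hq
  rw [← hc.graph_closure_eq_closure_graph, ← SetLike.mem_coe,
    Submodule.topologicalClosure_coe] at hp hq
  have hpq : (p, q) ∈ _root_.closure ((T.graph : Set (K × K)) ×ˢ (T.graph : Set (K × K))) := by
    rw [closure_prod_eq]; exact ⟨hp, hq⟩
  exact _root_.closure_minimal
    (t := {pq : (K × K) × (K × K) | ⟪pq.1.2, pq.2.1⟫_ℂ = ⟪pq.1.1, pq.2.2⟫_ℂ})
    (fun pq hpq => hT _ hpq.1 _ hpq.2) (isClosed_eq (by fun_prop) (by fun_prop)) hpq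

def rangeSubSMul (A : K →ₗ.[ℂ] K) (μ : ℂ) : Submodule ℂ K :=
  A.graph.map (LinearMap.snd ℂ K K - μ • LinearMap.fst ℂ K K)

theorem mem_rangeSubSMul_orthogonal_iff {A : K →ₗ.[ℂ] K} {μ : ℂ} {v : K} :
    v ∈ (A.rangeSubSMul μ)ᗮ ↔ ∀ p ∈ A.graph, ⟪v, p.2⟫_ℂ = μ * ⟪v, p.1⟫_ℂ := by
  simp only [Submodule.mem_orthogonal', rangeSubSMul, Submodule.mem_map, forall_exists_index,
    and_imp, forall_apply_eq_imp_iff₂, LinearMap.sub_apply, LinearMap.smul_apply,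
    LinearMap.snd_apply, LinearMap.fst_apply, inner_sub_right, inner_smul_right, sub_eq_zero]

section

variable [CompleteSpace K]

theorem IsFormalAdjoint.isClosable {T : K →ₗ.[ℂ] K} (hd : Dense (T.domain : Set K))
    (hT : T.IsFormalAdjoint T) : T.IsClosable :=
  (adjoint_isClosed hd).isClosable.leIsClosable (hT.le_adjoint hd)

theorem mem_adjoint_graph_iff {A : K →ₗ.[ℂ] K} (hd : Dense (A.domain : Set K)) {v : K × K} :
    v ∈ A†.graph ↔ ∀ p ∈ A.graph, ⟪p.2, v.1⟫_ℂ = ⟪p.1, v.2⟫_ℂ := by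
  simp only [adjoint_graph_eq_graph_adjoint hd, Submodule.mem_adjoint_iff, sub_eq_zero, Prod.forall]

theorem isClosed_rangeSubSMul_I {A : K →ₗ.[ℂ] K} (hc : A.IsClosed) (hs : A.IsFormalAdjoint A) :
    _root_.IsClosed (A.rangeSubSMul I : Set K) := by
  have : CompleteSpace A.graph := hc.completeSpace_coe
  let L : A.graph →L[ℂ] K :=
    (ContinuousLinearMap.snd ℂ K K - I • ContinuousLinearMap.fst ℂ K K).comp A.graph.subtypeL
  have hL : AntilipschitzWith 1 L := L.antilipschitz_of_bound fun p => by
    have h := norm_sub_I_smul_sq (isFormalAdjoint_self_iff.mp hs _ p.2 _ p.2)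
    have hLp : L p = (p : K × K).2 - I • (p : K × K).1 := rfl
    rw [NNReal.coe_one, one_mul]
    change ‖(p : K × K)‖ ≤ _
    rw [Prod.norm_def, max_le_iff, hLp]
    constructor <;> nlinarith [norm_nonneg (p : K × K).1, norm_nonneg (p : K × K).2,
      norm_nonneg ((p : K × K).2 - I • (p : K × K).1)]
  convert hL.isClosed_range L.uniformContinuous
  ext z
  simp [rangeSubSMul, L]

theorem isSelfAdjoint_of_orthogonal_rangeSubSMul_eq_bot {A : K →ₗ.[ℂ] K}
    (hd : Dense (A.domain : Set K)) (hc : A.IsClosed) (hs : A.IsFormalAdjoint A)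
    (hI : (A.rangeSubSMul I)ᗮ = ⊥) (hnegI : (A.rangeSubSMul (-I))ᗮ = ⊥) : IsSelfAdjoint A := by
  have := (isClosed_rangeSubSMul_I hc hs).completeSpace_coe
  have htop : A.rangeSubSMul I = ⊤ := Submodule.orthogonal_eq_bot_iff.mp hI
  have hle : A.graph ≤ A†.graph := le_graph_of_le (hs.le_adjoint hd)
  rw [isSelfAdjoint_def]
  refine eq_of_eq_graph (le_antisymm (fun ψ hψ => ?_) hle)
  obtain ⟨x, hx, hxψ⟩ : ∃ x ∈ A.graph, x.2 - I • x.1 = ψ.2 - I • ψ.1 := by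
    simpa [rangeSubSMul] using htop.ge (Submodule.mem_top (x := ψ.2 - I • ψ.1))
  have hv : ψ - x ∈ A†.graph := sub_mem hψ (hle hx)
  have hv2 : (ψ - x).2 = I • (ψ - x).1 := by
    simp only [Prod.snd_sub, Prod.fst_sub, smul_sub]
    linear_combination (norm := module) -hxψ
  have hv0 : (ψ - x).1 ∈ (A.rangeSubSMul (-I))ᗮ := by
    refine mem_rangeSubSMul_orthogonal_iff.mpr fun p hp => ?_
    have h := (mem_adjoint_graph_iff hd).mp hv p hp
    rw [hv2, inner_smul_right] at h
    rw [← inner_conj_symm, h, map_mul, conj_I, inner_conj_symm]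
  rw [hnegI, Submodule.mem_bot] at hv0
  have : ψ = x := by
    ext
    · exact sub_eq_zero.mp hv0
    · rw [hv0, smul_zero] at hv2; exact sub_eq_zero.mp hv2
  exact this ▸ hx

end

def IsAnalyticVector (A : K →ₗ.[ℂ] K) (x : K) : Prop :=
  ∃ t > (0 : ℝ), ∃ u : ℕ → K, u 0 = x ∧ (∀ k, ∃ hk : u k ∈ A.domain, u (k + 1) = A ⟨u k, hk⟩) ∧
    Summable (fun k => ‖u k‖ * t ^ k / (k ! : ℝ))

theorem isAnalyticVector_iff {A : K →ₗ.[ℂ] K} {x : K} :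
    A.IsAnalyticVector x ↔ ∃ t > (0 : ℝ), ∃ u : ℕ → K, u 0 = x ∧
      (∀ k, (u k, u (k + 1)) ∈ A.graph) ∧ Summable (fun k => ‖u k‖ * t ^ k / (k ! : ℝ)) := by
  have h : ∀ x y : K, (∃ hx : x ∈ A.domain, y = A ⟨x, hx⟩) ↔ (x, y) ∈ A.graph := fun x y =>
    ⟨fun ⟨hx, h⟩ => (image_iff hx).mp h, fun h => ⟨mem_domain_of_mem_graph h, (image_iff _).mpr h⟩⟩
  simp only [IsAnalyticVector, h]

theorem IsAnalyticVector.mono {T A : K →ₗ.[ℂ] K} {x : K} (hx : T.IsAnalyticVector x) (h : T ≤ A) :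
    A.IsAnalyticVector x := by
  obtain ⟨t, ht, u, hu0, hu, hsum⟩ := isAnalyticVector_iff.mp hx
  exact isAnalyticVector_iff.mpr ⟨t, ht, u, hu0, fun k => le_graph_of_le h (hu k), hsum⟩

theorem IsAnalyticVector.mem_domain {A : K →ₗ.[ℂ] K} {x : K} (hx : A.IsAnalyticVector x) :
    x ∈ A.domain := by
  obtain ⟨-, -, u, rfl, hu, -⟩ := hx
  exact (hu 0).1

/-- `e^{itA}` applied to the whole sequence of iterates `w k = Aᵏ (w 0)` at once, so that the
result is again a sequence of iterates. -/
noncomputable def flow (t : ℝ) (w : ℕ → K) (k : ℕ) : K :=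
  ∑' j, ((I * t) ^ j / j ! : ℂ) • w (j + k)

section Flow

variable {A : K →ₗ.[ℂ] K} {w : ℕ → K} {r t : ℝ}

theorem summable_norm_flow_term (hr : 0 < r) (hsum : Summable fun n => ‖w n‖ * r ^ n / n !)
    (ht : 2 * |t| ≤ r) (k : ℕ) : Summable fun j => ‖((I * t) ^ j / j ! : ℂ) • w (j + k)‖ := by
  refine Summable.of_nonneg_of_le (fun _ => norm_nonneg _) (fun j => ?_)
    (((summable_nat_add_iff k).mpr hsum).mul_left (2 ^ k * k ! / r ^ k))
  have hfac : ((j + k)! : ℝ) ≤ 2 ^ (j + k) * (j ! * k !) := by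
    exact_mod_cast Nat.add_factorial_le_two_pow_mul j k
  have hcoef : |t| ^ j / j ! ≤ 2 ^ k * k ! * r ^ j / (j + k)! := by
    rw [div_le_div_iff₀ (by positivity) (by positivity)]
    calc |t| ^ j * (j + k)! ≤ |t| ^ j * (2 ^ (j + k) * (j ! * k !)) := by gcongr
      _ = (2 * |t|) ^ j * (2 ^ k * k ! * j !) := by ring
      _ ≤ r ^ j * (2 ^ k * k ! * j !) := by gcongr
      _ = 2 ^ k * k ! * r ^ j * j ! := by ring
  calc ‖((I * t) ^ j / j ! : ℂ) • w (j + k)‖ = |t| ^ j / j ! * ‖w (j + k)‖ := by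
        simp [norm_smul, norm_pow]
    _ ≤ 2 ^ k * k ! * r ^ j / (j + k)! * ‖w (j + k)‖ :=
        mul_le_mul_of_nonneg_right hcoef (norm_nonneg _)
    _ = 2 ^ k * k ! / r ^ k * (‖w (j + k)‖ * r ^ (j + k) / (j + k)!) := by
        field_simp
        ring

theorem inner_iterate_add (hs : A.IsFormalAdjoint A) (hw : ∀ k, (w k, w (k + 1)) ∈ A.graph)
    (j k l : ℕ) : ⟪w (j + k), w l⟫_ℂ = ⟪w k, w (j + l)⟫_ℂ := by
  induction j generalizing l with
  | zero => simp
  | succ j ih =>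
    rw [add_right_comm, isFormalAdjoint_self_iff.mp hs _ (hw (j + k)) _ (hw l), ih, add_right_comm,
      add_assoc]

variable [CompleteSpace K]

theorem flow_mem_graph (hc : A.IsClosed) (hw : ∀ k, (w k, w (k + 1)) ∈ A.graph) (hr : 0 < r)
    (hsum : Summable fun n => ‖w n‖ * r ^ n / n !) (ht : 2 * |t| ≤ r) (k : ℕ) :
    (flow t w k, flow t w (k + 1)) ∈ A.graph := by
  have h := (summable_norm_flow_term hr hsum ht k).of_norm.hasSum.prodMk
    (summable_norm_flow_term hr hsum ht (k + 1)).of_norm.hasSum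
  exact hc.mem_of_tendsto h.tendsto_sum_nat
    (Filter.Eventually.of_forall fun n => sum_mem fun j _ => A.graph.smul_mem _ (hw (j + k)))

theorem inner_flow_zero {μ : ℂ} {v : K} (hv : ∀ p ∈ A.graph, ⟪v, p.2⟫_ℂ = μ * ⟪v, p.1⟫_ℂ)
    (hw : ∀ k, (w k, w (k + 1)) ∈ A.graph) (hr : 0 < r)
    (hsum : Summable fun n => ‖w n‖ * r ^ n / n !) (ht : 2 * |t| ≤ r) :
    ⟪v, flow t w 0⟫_ℂ = exp (I * t * μ) * ⟪v, w 0⟫_ℂ := by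
  have hpow : ∀ j, ⟪v, w j⟫_ℂ = μ ^ j * ⟪v, w 0⟫_ℂ := by
    intro j
    induction j with
    | zero => simp
    | succ j ih => rw [hv _ (hw j), ih, pow_succ]; ring
  have h := ((summable_norm_flow_term hr hsum ht 0).of_norm.hasSum.mapL (innerSL ℂ v)).tsum_eq
  simp only [innerSL_apply_apply] at h
  rw [flow, ← h, exp_eq_exp_ℂ, NormedSpace.exp_eq_tsum_div, ← tsum_mul_right]
  refine tsum_congr fun j => ?_
  rw [inner_smul_right, add_zero, hpow]
  ring

theorem norm_flow (hs : A.IsFormalAdjoint A) (hw : ∀ k, (w k, w (k + 1)) ∈ A.graph)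
    (hr : 0 < r) (hsum : Summable fun n => ‖w n‖ * r ^ n / n !) (ht : 2 * |t| ≤ r) (k : ℕ) :
    ‖flow t w k‖ = ‖w k‖ := by
  have hx := summable_norm_flow_term hr hsum ht k
  have hinner : ⟪flow t w k, flow t w k⟫_ℂ = ⟪w k, w k⟫_ℂ := by
    rw [flow, inner_tsum_tsum_eq_tsum_antidiagonal hx hx, tsum_eq_single 0]
    · simp
    intro n hn
    calc ∑ p ∈ antidiagonal n,
          ⟪((I * t) ^ p.1 / p.1 ! : ℂ) • w (p.1 + k), ((I * t) ^ p.2 / p.2 ! : ℂ) • w (p.2 + k)⟫_ℂ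
        = (∑ p ∈ antidiagonal n, (-(I * t)) ^ p.1 / (p.1 ! : ℂ) * ((I * t) ^ p.2 / p.2 !)) *
            ⟪w k, w (n + k)⟫_ℂ := by
          rw [sum_mul]
          refine sum_congr rfl fun p hp => ?_
          rw [inner_smul_left, inner_smul_right, inner_iterate_add hs hw, ← add_assoc,
            HasAntidiagonal.mem_antidiagonal.mp hp]
          simp [map_div₀, conj_ofReal]
          ring
      _ = 0 := by
          rw [sum_antidiagonal_pow_div_factorial, neg_add_cancel, zero_pow hn, zero_div, zero_mul]
  rw [norm_eq_sqrt_re_inner (𝕜 := ℂ), norm_eq_sqrt_re_inner (𝕜 := ℂ), hinner]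

end Flow

variable [CompleteSpace K]

theorem norm_exp_pow_mul_norm_inner_le {A : K →ₗ.[ℂ] K} (hc : A.IsClosed)
    (hs : A.IsFormalAdjoint A) {μ : ℂ} {v : K} (hv : ∀ p ∈ A.graph, ⟪v, p.2⟫_ℂ = μ * ⟪v, p.1⟫_ℂ)
    {w : ℕ → K} (hw : ∀ k, (w k, w (k + 1)) ∈ A.graph) {r t : ℝ} (hr : 0 < r)
    (hsum : Summable fun n => ‖w n‖ * r ^ n / n !) (ht : 2 * |t| ≤ r) (m : ℕ) :
    ‖exp (I * t * μ)‖ ^ m * ‖⟪v, w 0⟫_ℂ‖ ≤ ‖v‖ * ‖w 0‖ := by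
  obtain ⟨-, hnorm, hinner⟩ : (∀ k, ((flow t)^[m] w k, (flow t)^[m] w (k + 1)) ∈ A.graph) ∧
      (∀ k, ‖(flow t)^[m] w k‖ = ‖w k‖) ∧
      ⟪v, (flow t)^[m] w 0⟫_ℂ = exp (I * t * μ) ^ m * ⟪v, w 0⟫_ℂ := by
    induction m with
    | zero => simp [hw]
    | succ m ih =>
      obtain ⟨hwm, hnorm, hinner⟩ := ih
      have hsum' : Summable fun n => ‖(flow t)^[m] w n‖ * r ^ n / n ! :=
        hsum.congr fun n => by rw [hnorm n]
      rw [Function.iterate_succ_apply']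
      refine ⟨flow_mem_graph hc hwm hr hsum' ht, fun k => ?_, ?_⟩
      · rw [norm_flow hs hwm hr hsum' ht, hnorm]
      · rw [inner_flow_zero hv hwm hr hsum' ht, hinner, pow_succ]
        ring
  calc ‖exp (I * t * μ)‖ ^ m * ‖⟪v, w 0⟫_ℂ‖ = ‖⟪v, (flow t)^[m] w 0⟫_ℂ‖ := by
        rw [hinner, norm_mul, norm_pow]
    _ ≤ ‖v‖ * ‖w 0‖ := by
        rw [← hnorm 0]
        exact norm_inner_le_norm _ _

theorem inner_eq_zero_of_mem_orthogonal_rangeSubSMul {A : K →ₗ.[ℂ] K} (hc : A.IsClosed)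
    (hs : A.IsFormalAdjoint A) {μ : ℂ} (hμ : μ.im ≠ 0) {v x : K} (hv : v ∈ (A.rangeSubSMul μ)ᗮ)
    (hx : A.IsAnalyticVector x) : ⟪v, x⟫_ℂ = 0 := by
  obtain ⟨r, hr, w, rfl, hw, hsum⟩ := isAnalyticVector_iff.mp hx
  obtain ⟨t, ht, hgrow⟩ : ∃ t : ℝ, 2 * |t| ≤ r ∧ 1 < ‖exp (I * t * μ)‖ := by
    simp only [norm_exp, Real.one_lt_exp_iff, mul_re, mul_im, I_re, I_im, ofReal_re, ofReal_im]
    rcases hμ.lt_or_gt with h | h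
    · exact ⟨r / 2, by rw [abs_of_pos (half_pos hr)]; linarith, by nlinarith⟩
    · exact ⟨-(r / 2), by rw [abs_neg, abs_of_pos (half_pos hr)]; linarith, by nlinarith⟩
  by_contra h0
  obtain ⟨m, hm⟩ := pow_unbounded_of_one_lt (‖v‖ * ‖w 0‖ / ‖⟪v, w 0⟫_ℂ‖) hgrow
  rw [div_lt_iff₀ (norm_pos_iff.mpr h0)] at hm
  exact hm.not_ge (norm_exp_pow_mul_norm_inner_le hc hs
    (mem_rangeSubSMul_orthogonal_iff.mp hv) hw hr hsum ht m)

theorem isSelfAdjoint_closure_of_dense_isAnalyticVector {T : K →ₗ.[ℂ] K}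
    (hT : T.IsFormalAdjoint T) (hd : Dense {x | T.IsAnalyticVector x}) :
    T.IsClosable ∧ IsSelfAdjoint T.closure := by
  have hTd : Dense (T.domain : Set K) := hd.mono fun x hx => hx.mem_domain
  have hcl := hT.isClosable hTd
  have hAs := hT.closure hcl
  have hdef : ∀ μ : ℂ, μ.im ≠ 0 → (T.closure.rangeSubSMul μ)ᗮ = ⊥ := by
    refine fun μ hμ => (Submodule.eq_bot_iff _).mpr fun v hv => ?_
    have h : (fun x => ⟪v, x⟫_ℂ) = fun _ => 0 := Continuous.ext_on hd (by fun_prop)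
      continuous_const fun x hx => inner_eq_zero_of_mem_orthogonal_rangeSubSMul
        hcl.closure_isClosed hAs hμ hv (hx.mono T.le_closure)
    exact inner_self_eq_zero.mp (congrFun h v)
  exact ⟨hcl, isSelfAdjoint_of_orthogonal_rangeSubSMul_eq_bot
    (hTd.mono (T.le_closure).1) hcl.closure_isClosed hAs (hdef I (by simp)) (hdef (-I) (by simp))⟩

end LinearPMap

section Filtration

open LinearPMap

variable {s : K →ₗ.[ℂ] K} {Ksub : ℕ → Submodule ℂ K}
  (hKdom : ∀ n, (Ksub n : Set K) ⊆ s.domain)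
  (hmap : ∀ n x (hx : x ∈ Ksub n), s ⟨x, hKdom n hx⟩ ∈ Ksub (n + 1))

def filtrationIterate {n : ℕ} (η : Ksub n) : (k : ℕ) → Ksub (n + k)
  | 0 => η
  | k + 1 => ⟨s ⟨filtrationIterate η k, hKdom _ (filtrationIterate η k).2⟩,
      hmap _ _ (filtrationIterate η k).2⟩

variable {C : ℝ} (hbound : ∀ n x (hx : x ∈ Ksub n), ‖s ⟨x, hKdom n hx⟩‖ ≤ C * (n + 1) * ‖x‖)
include hmap hbound

theorem norm_filtrationIterate_mul_factorial_le (hC : 0 ≤ C) {n : ℕ} (η : Ksub n) (k : ℕ) :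
    ‖(filtrationIterate hKdom hmap η k : K)‖ * n ! ≤ C ^ k * (n + k)! * ‖(η : K)‖ := by
  induction k with
  | zero => simp [filtrationIterate, mul_comm]
  | succ k ih =>
    have hstep := hbound _ _ (filtrationIterate hKdom hmap η k).2
    calc ‖(filtrationIterate hKdom hmap η (k + 1) : K)‖ * n !
        ≤ C * (↑(n + k) + 1) * ‖(filtrationIterate hKdom hmap η k : K)‖ * n ! := by
          gcongr; exact hstep
      _ ≤ C * (↑(n + k) + 1) * (C ^ k * (n + k)! * ‖(η : K)‖) := by
          rw [mul_assoc]; gcongr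
      _ = C ^ (k + 1) * (n + (k + 1))! * ‖(η : K)‖ := by
          rw [← add_assoc, Nat.factorial_succ]; push_cast; ring

theorem isAnalyticVector_domRestrict_iSup (hC : 0 < C) {n : ℕ} {η : K} (hη : η ∈ Ksub n) :
    (s.domRestrict (⨆ n, Ksub n)).IsAnalyticVector η := by
  set u := filtrationIterate hKdom hmap ⟨η, hη⟩
  have hgrowth : ∀ k, ‖(u k : K)‖ ≤ 2 ^ n * ‖η‖ * (2 * C) ^ k * k ! := fun k => by
    have hfac : ((n + k)! : ℝ) ≤ 2 ^ (n + k) * (n ! * k !) := by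
      exact_mod_cast Nat.add_factorial_le_two_pow_mul n k
    have h := norm_filtrationIterate_mul_factorial_le hKdom hmap hbound hC.le ⟨η, hη⟩ k
    refine le_of_mul_le_mul_right (h.trans ?_) (by positivity : (0 : ℝ) < n !)
    calc C ^ k * (n + k)! * ‖η‖ ≤ C ^ k * (2 ^ (n + k) * (n ! * k !)) * ‖η‖ := by gcongr
      _ = 2 ^ n * ‖η‖ * (2 * C) ^ k * k ! * n ! := by ring
  refine isAnalyticVector_iff.mpr ⟨(4 * C)⁻¹, by positivity, fun k => u k, rfl, fun k => ?_, ?_⟩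
  · have hk : (u k : K) ∈ (s.domRestrict (⨆ n, Ksub n)).domain := by
      rw [domRestrict_domain]
      exact ⟨Submodule.mem_iSup_of_mem _ (u k).2, hKdom _ (u k).2⟩
    exact (image_iff hk).mp (domRestrict_apply rfl).symm
  refine Summable.of_nonneg_of_le (fun k => by positivity) (fun k => ?_)
    (summable_geometric_two.mul_left (2 ^ n * ‖η‖))
  calc ‖(u k : K)‖ * (4 * C)⁻¹ ^ k / k !
        ≤ 2 ^ n * ‖η‖ * (2 * C) ^ k * k ! * (4 * C)⁻¹ ^ k / k ! := by
          gcongr; exact hgrowth k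
    _ = 2 ^ n * ‖η‖ * ((2 * C) ^ k * (4 * C)⁻¹ ^ k) * (k ! / k !) := by ring
    _ = 2 ^ n * ‖η‖ * (2 * C * (4 * C)⁻¹) ^ k := by
        rw [← mul_pow, div_self (by positivity), mul_one]
    _ = 2 ^ n * ‖η‖ * (1 / 2) ^ k := by
        congr 2
        field_simp
        ring

end Filtration

end

theorem stmt7_general {K : Type*} [NormedAddCommGroup K] [InnerProductSpace ℂ K] [CompleteSpace K]
    (s : K →ₗ.[ℂ] K)
    -- `s` is symmetric
    (hsym : ∀ (x y : s.domain), (inner ℂ (s x) (y : K) : ℂ) = inner ℂ (x : K) (s y))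
    (Ksub : ℕ → Submodule ℂ K)
    (hKdense : Dense (⋃ n, (Ksub n : Set K)))
    (hKdom : ∀ n, (Ksub n : Set K) ⊆ s.domain)
    (hmap : ∀ n x (hx : x ∈ Ksub n), s ⟨x, hKdom n hx⟩ ∈ Ksub (n + 1))
    (C : ℝ) (hC : 0 < C)
    (hbound : ∀ n x (hx : x ∈ Ksub n), ‖s ⟨x, hKdom n hx⟩‖ ≤ C * (n + 1) * ‖x‖) :
    -- every vector in `⋃ n K_n` is analytic for `s`
    (∀ x ∈ ⋃ n, (Ksub n : Set K), ∃ t > (0 : ℝ), ∃ u : ℕ → K, u 0 = x ∧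
      (∀ k, ∃ hk : u k ∈ s.domain, u (k + 1) = s ⟨u k, hk⟩) ∧
      Summable (fun k => ‖u k‖ * t ^ k / (Nat.factorial k : ℝ))) ∧
    -- `s` is essentially self-adjoint on `⋃ n K_n`
    (s.domRestrict (⨆ n, Ksub n)).IsClosable ∧
    IsSelfAdjoint (s.domRestrict (⨆ n, Ksub n)).closure := by
  have hana : ∀ x ∈ ⋃ n, (Ksub n : Set K), (s.domRestrict (⨆ n, Ksub n)).IsAnalyticVector x := by
    intro x hx
    obtain ⟨n, hn⟩ := Set.mem_iUnion.mp hx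
    exact isAnalyticVector_domRestrict_iSup hKdom hmap hbound hC hn
  have hsymT : (s.domRestrict (⨆ n, Ksub n)).IsFormalAdjoint (s.domRestrict (⨆ n, Ksub n)) :=
    LinearPMap.IsFormalAdjoint.of_le hsym LinearPMap.domRestrict_le
  exact ⟨fun x hx => (hana x hx).mono LinearPMap.domRestrict_le,
    LinearPMap.isSelfAdjoint_closure_of_dense_isAnalyticVector hsymT (hKdense.mono hana)⟩

theorem stmt7 {K : Type*} [NormedAddCommGroup K] [InnerProductSpace ℂ K] [CompleteSpace K]
    (s : K →ₗ.[ℂ] K)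
    (hdense : Dense (s.domain : Set K))
    -- `s` is symmetric
    (hsym : ∀ (x y : s.domain), (inner ℂ (s x) (y : K) : ℂ) = inner ℂ (x : K) (s y))
    (Ksub : ℕ → Submodule ℂ K) (hKclosed : ∀ n, IsClosed (Ksub n : Set K))
    (hKmono : Monotone Ksub)
    (hKdense : Dense (⋃ n, (Ksub n : Set K)))
    (hKdom : ∀ n, (Ksub n : Set K) ⊆ s.domain)
    (hmap : ∀ n x (hx : x ∈ Ksub n), s ⟨x, hKdom n hx⟩ ∈ Ksub (n + 1))
    (C : ℝ) (hC : 0 < C)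
    (hbound : ∀ n x (hx : x ∈ Ksub n), ‖s ⟨x, hKdom n hx⟩‖ ≤ C * (n + 1) * ‖x‖) :
    -- every vector in `⋃ n K_n` is analytic for `s`
    (∀ x ∈ ⋃ n, (Ksub n : Set K), ∃ t > (0 : ℝ), ∃ u : ℕ → K, u 0 = x ∧
      (∀ k, ∃ hk : u k ∈ s.domain, u (k + 1) = s ⟨u k, hk⟩) ∧
      Summable (fun k => ‖u k‖ * t ^ k / (Nat.factorial k : ℝ))) ∧
    -- `s` is essentially self-adjoint on `⋃ n K_n`
    (s.domRestrict (⨆ n, Ksub n)).IsClosable ∧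
    IsSelfAdjoint (s.domRestrict (⨆ n, Ksub n)).closure :=
  stmt7_general s hsym Ksub hKdense hKdom hmap C hC hbound
end

section
/- Let G be a discrete group, H a complex Hilbert space, and π a unitary representation of G on H. Equip ℓ²(G) ⊗ H^{⊗n} with the G-action λ_g · (δ_h ⊗ ξ) = δ_{gh} ⊗ π(g)^{⊗n} ξ. Let T be a self-adjoint contraction on H ⊗ H with [T, π(g) ⊗ π(g)] = 0 for all g, and P_{T,n} the associated positivity operators. Then the unitary V_n on ℓ²(G) ⊗ H^{⊗n} defined by V_n(δ_g ⊗ ξ) = δ_g ⊗ π(g^{-1})^{⊗n} ξ is isometric with respect to the twisted inner product ⟨δ_g ⊗ ξ, δ_h ⊗ η⟩_T = δ_{g,h} ⟨ξ, P_{T,n} η⟩, i.e. ⟨V_n u, V_n v⟩_T = ⟨u, v⟩_T for all u, v. -/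
/-!
STATEMENT 14: Let `G` be a discrete group, `π` a unitary representation of `G` on `H`, and
`T` a self-adjoint contraction on `H ⊗ H` with `[T, π(g) ⊗ π(g)] = 0` for all `g`.  On
`ℓ²(G) ⊗ H^{⊗n}` with the `G`-action `λ_g (δ_h ⊗ ξ) = δ_{gh} ⊗ π(g)^{⊗n} ξ`, the unitary
`V_n (δ_g ⊗ ξ) = δ_g ⊗ π(g⁻¹)^{⊗n} ξ` is isometric for the twisted inner product
`⟨δ_g ⊗ ξ, δ_h ⊗ η⟩_T = δ_{g,h} ⟨ξ, P_{T,n} η⟩`, i.e. `⟨V_n u, V_n v⟩_T = ⟨u, v⟩_T` for all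
`u, v`.  Here an element `u` of `ℓ²(G) ⊗ H^{⊗n}` is represented as a function `G → H^{⊗n}`
and `⟨u, v⟩_T = Σ_g ⟨u(g), P_{T,n} v(g)⟩`; `π n g` stands for `π(g)^{⊗n}` on `E n = H^{⊗n}`.
-/

noncomputable section

variable {E : ℕ → Type*} [∀ n, NormedAddCommGroup (E n)] [∀ n, InnerProductSpace ℂ (E n)]
  [∀ n, CompleteSpace (E n)]

/-!
`P_{T,n}` is built from the tensor-leg operators `T_k` by products, sums and ampliation, each
of which preserves commuting with `π(g)^{⊗n}`, so `P_{T,n}` commutes with every `π(g)^{⊗n}`.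
Then on each summand `⟨π(g⁻¹) ξ, P π(g⁻¹) η⟩ = ⟨π(g⁻¹) ξ, π(g⁻¹) P η⟩ = ⟨ξ, P η⟩` because
`π(g⁻¹)` is unitary.
-/

theorem ContinuousLinearMap.inner_map_apply_map_of_commute {H : Type*} [NormedAddCommGroup H]
    [InnerProductSpace ℂ H] [CompleteSpace H] {P U : H →L[ℂ] H} (hU : adjoint U ∘L U = 1)
    (hPU : Commute P U) (x y : H) :
    inner ℂ (U x) (P (U y)) = inner ℂ x (P y) := by
  rw [show P (U y) = U (P y) from DFunLike.congr_fun hPU.eq y,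
    (inner_map_map_iff_adjoint_comp_self U).mpr hU]

section CommutePop

variable {T : ∀ n, ℕ → (E n →L[ℂ] E n)} {B : ∀ n, E n →L[ℂ] E n}

omit [∀ n, CompleteSpace (E n)] in
theorem chainT_commute {n : ℕ} (hT : ∀ k, 1 ≤ k → k ≤ n - 1 → Commute (T n k) (B n)) :
    ∀ k, k ≤ n - 1 → Commute (chainT T n k) (B n)
  | 0, _ => Commute.one_left _
  | k + 1, hk => (chainT_commute hT k (by omega)).mul_left (hT (k + 1) (by omega) hk)

omit [∀ n, CompleteSpace (E n)] in
theorem Rop_commute {n : ℕ} (hT : ∀ k, 1 ≤ k → k ≤ n - 1 → Commute (T n k) (B n)) :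
    Commute (Rop T n) (B n) :=
  Commute.sum_left _ _ _ fun k hk =>
    chainT_commute hT k (Nat.le_sub_one_of_lt (Finset.mem_range.mp hk))

theorem Pop_commute {amp : ∀ n, (E n →L[ℂ] E n) →⋆ₐ[ℂ] (E (n + 1) →L[ℂ] E (n + 1))}
    (hT : ∀ n k, 1 ≤ k → k ≤ n - 1 → Commute (T n k) (B n))
    (hamp : ∀ n A, Commute A (B n) → Commute (amp n A) (B (n + 1))) :
    ∀ n, Commute (Pop T amp n) (B n)
  | 0 => Commute.one_left _
  | n + 1 => (hamp n _ (Pop_commute hT hamp n)).mul_left (Rop_commute (hT (n + 1)))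

end CommutePop

theorem stmt14_general {G : Type*} [Group G]
    (T : ∀ n, ℕ → (E n →L[ℂ] E n))
    (amp : ∀ n, (E n →L[ℂ] E n) →⋆ₐ[ℂ] (E (n + 1) →L[ℂ] E (n + 1)))
    -- `π n g = π(g)^{⊗n}` is a unitary representation of `G` on each tensor power
    (π : ∀ n, G → (E n →L[ℂ] E n))
    (hπone : ∀ n, π n 1 = 1)
    (hπmul : ∀ n g h, π n (g * h) = π n g * π n h)
    (hπadj : ∀ n g, ContinuousLinearMap.adjoint (π n g) = π n g⁻¹)
    -- `[T, π(g) ⊗ π(g)] = 0`, transported to every tensor leg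
    (hTπ : ∀ n k g, 1 ≤ k → k ≤ n - 1 → Commute (T n k) (π n g))
    -- the ampliation is `G`-compatible: `1 ⊗ A` commutes with `π(g)^{⊗(n+1)}` whenever
    -- `A` commutes with `π(g)^{⊗n}`
    (hampπ : ∀ n g (A : E n →L[ℂ] E n),
      Commute A (π n g) → Commute (amp n A) (π (n + 1) g)) :
    ∀ n (u v : G → E n),
      ∑ᶠ g, (inner ℂ (π n g⁻¹ (u g)) (Pop T amp n (π n g⁻¹ (v g))) : ℂ) =
        ∑ᶠ g, (inner ℂ (u g) (Pop T amp n (v g)) : ℂ) := by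
  intro n u v
  refine finsum_congr fun g =>
    ContinuousLinearMap.inner_map_apply_map_of_commute ?_ ?_ (u g) (v g)
  · rw [hπadj, inv_inv, ← ContinuousLinearMap.mul_def, ← hπmul, mul_inv_cancel, hπone]
  · exact Pop_commute (fun n k => hTπ n k g⁻¹) (fun n => hampπ n g⁻¹) n

theorem stmt14 {G : Type*} [Group G]
    (T : ∀ n, ℕ → (E n →L[ℂ] E n))
    (amp : ∀ n, (E n →L[ℂ] E n) →⋆ₐ[ℂ] (E (n + 1) →L[ℂ] E (n + 1)))
    (hamp : ∀ n k, 1 ≤ k → k ≤ n - 1 → amp n (T n k) = T (n + 1) (k + 1))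
    (hsa : ∀ n k, 1 ≤ k → k ≤ n - 1 → IsSelfAdjoint (T n k))
    (hcontr : ∀ n k, 1 ≤ k → k ≤ n - 1 → ‖T n k‖ ≤ 1)
    -- `π n g = π(g)^{⊗n}` is a unitary representation of `G` on each tensor power
    (π : ∀ n, G → (E n →L[ℂ] E n))
    (hπone : ∀ n, π n 1 = 1)
    (hπmul : ∀ n g h, π n (g * h) = π n g * π n h)
    (hπadj : ∀ n g, ContinuousLinearMap.adjoint (π n g) = π n g⁻¹)
    -- `[T, π(g) ⊗ π(g)] = 0`, transported to every tensor leg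
    (hTπ : ∀ n k g, 1 ≤ k → k ≤ n - 1 → Commute (T n k) (π n g))
    -- the ampliation is `G`-compatible: `1 ⊗ A` commutes with `π(g)^{⊗(n+1)}` whenever
    -- `A` commutes with `π(g)^{⊗n}`
    (hampπ : ∀ n g (A : E n →L[ℂ] E n),
      Commute A (π n g) → Commute (amp n A) (π (n + 1) g)) :
    ∀ n (u v : G → E n),
      ∑ᶠ g, (inner ℂ (π n g⁻¹ (u g)) (Pop T amp n (π n g⁻¹ (v g))) : ℂ) =
        ∑ᶠ g, (inner ℂ (u g) (Pop T amp n (v g)) : ℂ) :=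
  stmt14_general T amp π hπone hπmul hπadj hTπ hampπ

end
end

section
/- Let H be a complex Hilbert space with anti-unitary involution J, and let T be a braided twist on H ⊗ H satisfying J^{(2)} T = T J^{(2)}, where J^{(2)}(ξ ⊗ η) = Jη ⊗ Jξ. Define J^{(n)} on H^{⊗n} by J^{(n)}(ξ₁ ⊗ … ⊗ ξ_n) = Jξ_n ⊗ … ⊗ Jξ₁. Then J^{(n)} T_k = T_{n−k} J^{(n)} for 1 ≤ k ≤ n−1, J^{(n)} R̃_{T,n} = R_{T,n} J^{(n)}, and [P_{T,n}, J^{(n)}] = 0 for all n. -/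
/-!
STATEMENT 16: Let `J` be an anti-unitary involution on `H` and `T` a braided twist on
`H ⊗ H` commuting with `J^{(2)}` (where `J^{(2)}(ξ ⊗ η) = Jη ⊗ Jξ`).  With
`J^{(n)}(ξ₁ ⊗ ⋯ ⊗ ξ_n) = Jξ_n ⊗ ⋯ ⊗ Jξ₁` one has `J^{(n)} T_k = T_{n-k} J^{(n)}` for
`1 ≤ k ≤ n-1`, `J^{(n)} R̃_{T,n} = R_{T,n} J^{(n)}`, and `[P_{T,n}, J^{(n)}] = 0`.
Here `Jn n = J^{(n)}`, `cJ n A = J^{(n)} A J^{(n)}` and `amp n = 1 ⊗ ·`, `ampR n = · ⊗ 1`.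
-/

noncomputable section

variable {E : ℕ → Type*} [∀ n, NormedAddCommGroup (E n)] [∀ n, InnerProductSpace ℂ (E n)]
  [∀ n, CompleteSpace (E n)]

/-- `revChainT T n k = T_{n-1} T_{n-2} ⋯ T_{n-k}`. -/
def revChainT (T : ∀ n, ℕ → (E n →L[ℂ] E n)) (n : ℕ) : ℕ → (E n →L[ℂ] E n)
  | 0 => 1
  | k + 1 => revChainT T n k * T n (n - 1 - k)

/-- `Rtilde T n = 1 + T_{n-1} + T_{n-1}T_{n-2} + ⋯ + T_{n-1}⋯T₁`. -/
def Rtilde (T : ∀ n, ℕ → (E n →L[ℂ] E n)) (n : ℕ) : E n →L[ℂ] E n :=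
  ∑ k ∈ Finset.range n, revChainT T n k

section BraidAux

variable {A : Type*} [Ring A]

/-- `upc S j = S 1 * S 2 * ⋯ * S j`. -/
def upc (S : ℕ → A) : ℕ → A
  | 0 => 1
  | k + 1 => upc S k * S (k + 1)

/-- `dwc S t k = S t * S (t-1) * ⋯ * S (t-k+1)` (`k` factors). -/
def dwc (S : ℕ → A) : ℕ → ℕ → A
  | _, 0 => 1
  | t, k + 1 => S t * dwc S (t - 1) k

lemma dwc_succ (S : ℕ → A) (t k : ℕ) : dwc S t (k + 1) = dwc S t k * S (t - k) := by
  induction k generalizing t with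
  | zero => show S t * 1 = 1 * S t; rw [mul_one, one_mul]
  | succ k ih =>
    show S t * dwc S (t - 1) (k + 1) = (S t * dwc S (t - 1) k) * S (t - (k + 1))
    rw [ih, ← mul_assoc]
    congr 2
    omega

section withB

variable (S : ℕ → A) (B : ℕ)
  (hcm : ∀ j k, 1 ≤ j → j + 2 ≤ k → k ≤ B → Commute (S j) (S k))
  (hbr : ∀ k, 1 ≤ k → k + 1 ≤ B → S k * S (k + 1) * S k = S (k + 1) * S k * S (k + 1))

include hcm in
lemma comm_upc : ∀ j i, j + 2 ≤ i → i ≤ B → Commute (S i) (upc S j) := by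
  intro j
  induction j with
  | zero => intro i _ _; exact Commute.one_right _
  | succ j ih =>
    intro i h1 h2
    exact (ih i (by omega) h2).mul_right ((hcm (j + 1) i (by omega) h1 h2).symm)

include hcm in
lemma comm_dwc_below : ∀ k t i, 1 ≤ i → i + k + 1 ≤ t → t ≤ B → Commute (S i) (dwc S t k) := by
  intro k
  induction k with
  | zero => intro t i _ _ _; exact Commute.one_right _
  | succ k ih =>
    intro t i h1 h2 h3
    exact (hcm i t h1 (by omega) h3).mul_right (ih (t - 1) i h1 (by omega) (by omega))

include hcm in
lemma comm_dwc_above : ∀ k t i, t + 2 ≤ i → i ≤ B → k ≤ t → Commute (S i) (dwc S t k) := by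
  intro k
  induction k with
  | zero => intro t i _ _ _; exact Commute.one_right _
  | succ k ih =>
    intro t i h1 h2 h3
    exact ((hcm t i (by omega) h1 h2).symm).mul_right (ih (t - 1) i (by omega) h2 (by omega))

include hcm in
lemma comm_upc_dwc : ∀ k t j, j + k + 1 ≤ t → t ≤ B → Commute (upc S j) (dwc S t k) := by
  intro k
  induction k with
  | zero => intro t j _ _; exact Commute.one_right _
  | succ k ih =>
    intro t j h1 h2
    exact ((comm_upc S B hcm j t (by omega) h2).symm).mul_right (ih (t - 1) j (by omega) (by omega))

include hcm hbr in
lemma dwc_top : ∀ k t, 1 ≤ k → k + 1 ≤ t → t ≤ B →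
    dwc S t (k + 1) * S t = S (t - 1) * dwc S t (k + 1) := by
  intro k t hk hkt htB
  obtain ⟨k', rfl⟩ : ∃ k', k = k' + 1 := ⟨k - 1, by omega⟩
  have h12 : t - 1 - 1 = t - 2 := by omega
  have hc : Commute (S t) (dwc S (t - 2) k') :=
    comm_dwc_above S B hcm k' (t - 2) t (by omega) htB (by omega)
  have hb : S (t - 1) * S t * S (t - 1) = S t * S (t - 1) * S t := by
    have := hbr (t - 1) (by omega) (by omega)
    rwa [show t - 1 + 1 = t by omega] at this
  show (S t * dwc S (t - 1) (k' + 1)) * S t = S (t - 1) * (S t * dwc S (t - 1) (k' + 1))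
  rw [show dwc S (t - 1) (k' + 1) = S (t - 1) * dwc S (t - 1 - 1) k' from rfl, h12]
  simp only [← mul_assoc]
  rw [mul_assoc (S t * S (t - 1)) (dwc S (t - 2) k') (S t), ← hc.eq, ← mul_assoc, ← hb]

include hcm hbr in
lemma swap_lemma : ∀ m t j k, t + j ≤ m → 1 ≤ j → j ≤ t → t ≤ B → t ≤ j + k → k + 1 ≤ t →
    dwc S t k * upc S j = upc S (j - 1) * dwc S t (k + 1) := by
  intro m
  induction m with
  | zero => intro t j k h1 h2 _ _ _ _; omega
  | succ m ih =>
    intro t j k hm hj1 hjt htB htjk hkt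
    obtain ⟨j', rfl⟩ : ∃ j', j = j' + 1 := ⟨j - 1, by omega⟩
    by_cases hadj : t = j' + 1 + k
    · -- adjacent / disjoint case
      have hcomm' : Commute (upc S j') (dwc S t k) :=
        comm_upc_dwc S B hcm k t j' (by omega) htB
      show dwc S t k * (upc S j' * S (j' + 1)) = upc S j' * dwc S t (k + 1)
      rw [← mul_assoc, ← hcomm'.eq, mul_assoc, dwc_succ, show t - k = j' + 1 by omega]
    · by_cases hjt' : j' + 1 = t
      · -- j = t case
        have hk1 : 1 ≤ k := by omega
        obtain ⟨j'', rfl⟩ : ∃ j'', j' = j'' + 1 := ⟨j' - 1, by omega⟩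
        show dwc S t k * (upc S (j'' + 1) * S (j'' + 2)) = upc S (j'' + 1) * dwc S t (k + 1)
        rw [← mul_assoc,
          ih t (j'' + 1) k (by omega) (by omega) (by omega) htB (by omega) hkt,
          mul_assoc, show (j'' : ℕ) + 2 = t from hjt',
          dwc_top S B hcm hbr k t hk1 hkt htB, ← mul_assoc,
          show t - 1 = j'' + 1 by omega]
        rfl
      · -- j < t, overlap: peel the top of the down chain
        obtain ⟨k', rfl⟩ : ∃ k', k = k' + 1 := ⟨k - 1, by omega⟩
        have hcomm' : Commute (S t) (upc S j') := comm_upc S B hcm j' t (by omega) htB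
        show (S t * dwc S (t - 1) k') * upc S (j' + 1) = upc S j' * dwc S t (k' + 2)
        rw [mul_assoc,
          ih (t - 1) (j' + 1) k' (by omega) (by omega) (by omega) (by omega) (by omega)
            (by omega)]
        simp only [Nat.add_sub_cancel]
        rw [← mul_assoc, hcomm'.eq, mul_assoc]
        rfl

include hcm hbr in
lemma sum_identity (n : ℕ) (hB : B = n + 1) :
    (∑ k ∈ Finset.range (n + 1), dwc S (n + 1) k) * (∑ j ∈ Finset.range (n + 2), upc S j)
      = (∑ j ∈ Finset.range (n + 1), upc S j)
        * (∑ k ∈ Finset.range (n + 2), dwc S (n + 1) k) := by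
  subst hB
  rw [Finset.sum_mul_sum, Finset.sum_mul_sum, ← Finset.sum_product', ← Finset.sum_product']
  refine Finset.sum_nbij'
    (fun p => if p.2 + p.1 ≤ n then (p.2, p.1) else (p.2 - 1, p.1 + 1))
    (fun q => if q.1 + q.2 ≤ n then (q.2, q.1) else (q.2 - 1, q.1 + 1)) ?_ ?_ ?_ ?_ ?_
  · rintro ⟨k, j⟩ hp
    simp only [Finset.mem_product, Finset.mem_range] at hp ⊢
    split_ifs with h <;> constructor <;> simp <;> omega
  · rintro ⟨j, k⟩ hq
    simp only [Finset.mem_product, Finset.mem_range] at hq ⊢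
    split_ifs with h <;> constructor <;> simp <;> omega
  · rintro ⟨k, j⟩ hp
    simp only [Finset.mem_product, Finset.mem_range] at hp
    dsimp only
    split_ifs with h h2 <;> simp only [Prod.mk.injEq] <;> omega
  · rintro ⟨j, k⟩ hq
    simp only [Finset.mem_product, Finset.mem_range] at hq
    dsimp only
    split_ifs with h h2 <;> simp only [Prod.mk.injEq] <;> omega
  · rintro ⟨k, j⟩ hp
    simp only [Finset.mem_product, Finset.mem_range] at hp
    by_cases h : j + k ≤ n
    · simp only [h, if_pos]
      exact (comm_upc_dwc S (n + 1) hcm k (n + 1) j (by omega) le_rfl).eq.symm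
    · simp only [h, if_neg, not_false_iff]
      have := swap_lemma S (n + 1) hcm hbr (n + 1 + j) (n + 1) j k le_rfl (by omega)
        (by omega) le_rfl (by omega) (by omega)
      simpa using this

end withB

end BraidAux

section Bridges

variable {E : ℕ → Type*} [∀ n, NormedAddCommGroup (E n)] [∀ n, InnerProductSpace ℂ (E n)]
  [∀ n, CompleteSpace (E n)]

lemma chainT_eq_upc (T : ∀ n, ℕ → (E n →L[ℂ] E n)) (N : ℕ) :
    ∀ k, chainT T N k = upc (T N) k := by
  intro k
  induction k with
  | zero => rfl
  | succ k ih =>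
    show chainT T N k * T N (k + 1) = upc (T N) k * T N (k + 1)
    rw [ih]

lemma revChainT_eq_dwc (T : ∀ n, ℕ → (E n →L[ℂ] E n)) (N : ℕ) :
    ∀ k, revChainT T N k = dwc (T N) (N - 1) k := by
  intro k
  induction k with
  | zero => rfl
  | succ k ih =>
    show revChainT T N k * T N (N - 1 - k) = _
    rw [ih, ← dwc_succ]

end Bridges

theorem stmt16
    (T : ∀ n, ℕ → (E n →L[ℂ] E n))
    (amp ampR : ∀ n, (E n →L[ℂ] E n) →⋆ₐ[ℂ] (E (n + 1) →L[ℂ] E (n + 1)))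
    (hamp : ∀ n k, 1 ≤ k → k ≤ n - 1 → amp n (T n k) = T (n + 1) (k + 1))
    (hampR : ∀ n k, 1 ≤ k → k ≤ n - 1 → ampR n (T n k) = T (n + 1) k)
    (hampcomm : ∀ n (A : E n →L[ℂ] E n), amp (n + 1) (ampR n A) = ampR (n + 1) (amp n A))
    -- `T` is a braided twist
    (hsa : ∀ n k, 1 ≤ k → k ≤ n - 1 → IsSelfAdjoint (T n k))
    (hcontr : ∀ n k, 1 ≤ k → k ≤ n - 1 → ‖T n k‖ ≤ 1)
    (hbraid : ∀ n k, 1 ≤ k → k + 1 ≤ n - 1 →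
      T n k * T n (k + 1) * T n k = T n (k + 1) * T n k * T n (k + 1))
    (hcomm : ∀ n j k, 1 ≤ j → j + 2 ≤ k → k ≤ n - 1 → Commute (T n j) (T n k))
    -- `Jn n = J^{(n)}` are anti-unitary involutions
    (Jn : ∀ n, E n → E n)
    (hJadd : ∀ n (x y : E n), Jn n (x + y) = Jn n x + Jn n y)
    (hJsmul : ∀ n (c : ℂ) (x : E n), Jn n (c • x) = (starRingEnd ℂ c) • Jn n x)
    (hJinner : ∀ n (x y : E n), (inner ℂ (Jn n x) (Jn n y) : ℂ) = inner ℂ y x)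
    (hJinv : ∀ n (x : E n), Jn n (Jn n x) = x)
    -- `cJ n A = J^{(n)} A J^{(n)}`
    (cJ : ∀ n, (E n →L[ℂ] E n) → (E n →L[ℂ] E n))
    (hcJ : ∀ n (A : E n →L[ℂ] E n) (x : E n), cJ n A x = Jn n (A (Jn n x)))
    -- structural transport of the reversal by the ampliations:
    -- `J^{(n+1)} (1 ⊗ A) J^{(n+1)} = (J^{(n)} A J^{(n)}) ⊗ 1` and symmetrically
    (hJamp : ∀ n (A : E n →L[ℂ] E n), cJ (n + 1) (amp n A) = ampR n (cJ n A))
    (hJampR : ∀ n (A : E n →L[ℂ] E n), cJ (n + 1) (ampR n A) = amp n (cJ n A))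
    -- hypothesis: `[T, J^{(2)}] = 0`
    (hJT2 : ∀ x : E 2, Jn 2 (T 2 1 x) = T 2 1 (Jn 2 x)) :
    -- (i) `J^{(n)} T_k = T_{n-k} J^{(n)}`
    (∀ n k, 1 ≤ k → k ≤ n - 1 → ∀ x : E n, Jn n (T n k x) = T n (n - k) (Jn n x)) ∧
    -- (ii) `J^{(n)} R̃_{T,n} = R_{T,n} J^{(n)}`
    (∀ n (x : E n), Jn n (Rtilde T n x) = Rop T n (Jn n x)) ∧
    -- (iii) `[P_{T,n}, J^{(n)}] = 0`
    (∀ n (x : E n), Jn n (Pop T amp n x) = Pop T amp n (Jn n x)) := by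

  classical
  -- conjugation by J is multiplicative, unital, additive over sums, involutive
  have cJ_mul : ∀ n (P Q : E n →L[ℂ] E n), cJ n (P * Q) = cJ n P * cJ n Q := by
    intro n P Q
    ext x
    simp only [ContinuousLinearMap.mul_apply, hcJ, hJinv]
  have cJ_one : ∀ n, cJ n (1 : E n →L[ℂ] E n) = 1 := by
    intro n
    ext x
    simp only [ContinuousLinearMap.one_apply, hcJ, hJinv]
  have cJ_invol : ∀ n (P : E n →L[ℂ] E n), cJ n (cJ n P) = P := by
    intro n P
    ext x
    simp only [hcJ, hJinv]
  have cJ_sum : ∀ n (s : Finset ℕ) (f : ℕ → (E n →L[ℂ] E n)),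
      cJ n (∑ k ∈ s, f k) = ∑ k ∈ s, cJ n (f k) := by
    intro n s f
    ext x
    rw [hcJ, ContinuousLinearMap.sum_apply, ContinuousLinearMap.sum_apply]
    have hms := map_sum (AddMonoidHom.mk' (Jn n) (hJadd n)) (fun k => f k (Jn n x)) s
    exact hms.trans (Finset.sum_congr rfl fun k _ => (hcJ n (f k) x).symm)
  -- (i) at the operator level
  have cJ_T : ∀ n k, 1 ≤ k → k ≤ n - 1 → cJ n (T n k) = T n (n - k) := by
    intro n
    induction n with
    | zero => intro k h1 h2; omega
    | succ n ih =>
      intro k h1 h2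
      match n, ih, h2 with
      | 0, _, h2 => omega
      | 1, _, h2 =>
        have hk : k = 1 := by omega
        subst hk
        ext x
        rw [hcJ, hJT2, hJinv]
      | (m + 2), ih, h2 =>
        match k, h1, h2 with
        | 1, _, _ =>
          rw [show T (m + 3) 1 = ampR (m + 2) (T (m + 2) 1) from
              (hampR (m + 2) 1 le_rfl (by omega)).symm,
            hJampR, ih 1 le_rfl (by omega), hamp (m + 2) (m + 2 - 1) (by omega) (by omega)]
          all_goals (congr 1 <;> omega)
        | (k + 2), _, h2 =>
          rw [show T (m + 3) (k + 2) = amp (m + 2) (T (m + 2) (k + 1)) from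
              (hamp (m + 2) (k + 1) (by omega) (by omega)).symm,
            hJamp, ih (k + 1) (by omega) (by omega),
            hampR (m + 2) (m + 2 - (k + 1)) (by omega) (by omega)]
          all_goals (congr 1 <;> omega)
  have cJ_chain : ∀ n k, k ≤ n - 1 → cJ n (chainT T n k) = revChainT T n k := by
    intro n k
    induction k with
    | zero => intro _; exact cJ_one n
    | succ k ih =>
      intro h
      show cJ n (chainT T n k * T n (k + 1)) = revChainT T n k * T n (n - 1 - k)
      rw [cJ_mul, ih (by omega), cJ_T n (k + 1) (by omega) h,
        show n - (k + 1) = n - 1 - k by omega]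
  have cJ_rev : ∀ n k, k ≤ n - 1 → cJ n (revChainT T n k) = chainT T n k := by
    intro n k h
    rw [← cJ_chain n k h, cJ_invol]
  have cJ_Rop : ∀ n, cJ n (Rop T n) = Rtilde T n := by
    intro n
    show cJ n (∑ k ∈ Finset.range n, chainT T n k) = ∑ k ∈ Finset.range n, revChainT T n k
    rw [cJ_sum]
    exact Finset.sum_congr rfl fun k hk =>
      cJ_chain n k (by have := Finset.mem_range.mp hk; omega)
  have cJ_Rtilde : ∀ n, cJ n (Rtilde T n) = Rop T n := by
    intro n
    show cJ n (∑ k ∈ Finset.range n, revChainT T n k) = ∑ k ∈ Finset.range n, chainT T n k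
    rw [cJ_sum]
    exact Finset.sum_congr rfl fun k hk =>
      cJ_rev n k (by have := Finset.mem_range.mp hk; omega)
  -- ampliation of the chains
  have amp_dwc : ∀ n t k, k ≤ t → t ≤ n →
      amp (n + 1) (dwc (T (n + 1)) t k) = dwc (T (n + 2)) (t + 1) k := by
    intro n t k
    induction k generalizing t with
    | zero => intro _ _; exact map_one _
    | succ k ih =>
      intro h1 h2
      show amp (n + 1) (T (n + 1) t * dwc (T (n + 1)) (t - 1) k)
          = T (n + 2) (t + 1) * dwc (T (n + 2)) (t + 1 - 1) k
      rw [map_mul, hamp (n + 1) t (by omega) (by omega), ih (t - 1) (by omega) (by omega),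
        show t - 1 + 1 = t by omega]
      rfl
  have ampR_upc : ∀ n j, j ≤ n →
      ampR (n + 1) (upc (T (n + 1)) j) = upc (T (n + 2)) j := by
    intro n j
    induction j with
    | zero => intro _; exact map_one _
    | succ j ih =>
      intro h
      show ampR (n + 1) (upc (T (n + 1)) j * T (n + 1) (j + 1))
          = upc (T (n + 2)) j * T (n + 2) (j + 1)
      rw [map_mul, ih (by omega), hampR (n + 1) (j + 1) (by omega) (by omega)]
  have Rop_eq : ∀ N, Rop T N = ∑ j ∈ Finset.range N, upc (T N) j := by
    intro N
    exact Finset.sum_congr rfl fun j _ => chainT_eq_upc T N j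
  have Rtilde_eq : ∀ N, Rtilde T N = ∑ k ∈ Finset.range N, dwc (T N) (N - 1) k := by
    intro N
    exact Finset.sum_congr rfl fun k _ => revChainT_eq_dwc T N k
  -- the key sum identity
  have key_sum : ∀ n, amp (n + 1) (Rtilde T (n + 1)) * Rop T (n + 2)
      = ampR (n + 1) (Rop T (n + 1)) * Rtilde T (n + 2) := by
    intro n
    have h1 : amp (n + 1) (Rtilde T (n + 1))
        = ∑ k ∈ Finset.range (n + 1), dwc (T (n + 2)) (n + 1) k := by
      rw [Rtilde_eq, map_sum]
      exact Finset.sum_congr rfl fun k hk =>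
        amp_dwc n n k (by have := Finset.mem_range.mp hk; omega) le_rfl
    have h2 : ampR (n + 1) (Rop T (n + 1))
        = ∑ j ∈ Finset.range (n + 1), upc (T (n + 2)) j := by
      rw [Rop_eq, map_sum]
      exact Finset.sum_congr rfl fun j hj =>
        ampR_upc n j (by have := Finset.mem_range.mp hj; omega)
    rw [h1, h2, Rop_eq (n + 2), Rtilde_eq (n + 2)]
    exact sum_identity (T (n + 2)) (n + 1)
      (fun j k hj hk hkB => hcomm (n + 2) j k hj hk (by omega))
      (fun k hk hkB => hbraid (n + 2) k hk (by omega)) n rfl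
  -- both recursions for P
  have Pboth : ∀ n, amp n (Pop T amp n) * Rop T (n + 1)
      = ampR n (Pop T amp n) * Rtilde T (n + 1) := by
    intro n
    induction n with
    | zero =>
      have e1 : Rop T 1 = 1 := by
        show (∑ k ∈ Finset.range 1, chainT T 1 k) = 1
        rw [Finset.sum_range_one]
        rfl
      have e2 : Rtilde T 1 = 1 := by
        show (∑ k ∈ Finset.range 1, revChainT T 1 k) = 1
        rw [Finset.sum_range_one]
        rfl
      show amp 0 (1 : E 0 →L[ℂ] E 0) * Rop T 1 = ampR 0 (1 : E 0 →L[ℂ] E 0) * Rtilde T 1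
      rw [e1, e2, map_one, map_one]
    | succ n ih =>
      have hP : Pop T amp (n + 1) = amp n (Pop T amp n) * Rop T (n + 1) := rfl
      calc amp (n + 1) (Pop T amp (n + 1)) * Rop T (n + 2)
          = amp (n + 1) (ampR n (Pop T amp n) * Rtilde T (n + 1)) * Rop T (n + 2) := by
            rw [hP, ih]
        _ = amp (n + 1) (ampR n (Pop T amp n))
              * (amp (n + 1) (Rtilde T (n + 1)) * Rop T (n + 2)) := by
            rw [map_mul, mul_assoc]
        _ = ampR (n + 1) (amp n (Pop T amp n))
              * (ampR (n + 1) (Rop T (n + 1)) * Rtilde T (n + 2)) := by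
            rw [hampcomm, key_sum n]
        _ = ampR (n + 1) (amp n (Pop T amp n) * Rop T (n + 1)) * Rtilde T (n + 2) := by
            rw [map_mul, mul_assoc]
        _ = ampR (n + 1) (Pop T amp (n + 1)) * Rtilde T (n + 2) := by rw [← hP]
  have cJ_Pop : ∀ n, cJ n (Pop T amp n) = Pop T amp n := by
    intro n
    induction n with
    | zero => exact cJ_one 0
    | succ n ih =>
      show cJ (n + 1) (amp n (Pop T amp n) * Rop T (n + 1)) = Pop T amp (n + 1)
      rw [cJ_mul, hJamp, ih, cJ_Rop, ← Pboth n]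
      rfl
  refine ⟨?_, ?_, ?_⟩
  · intro n k h1 h2 x
    have h := DFunLike.congr_fun (cJ_T n k h1 h2) (Jn n x)
    rw [hcJ, hJinv] at h
    exact h
  · intro n x
    have h := DFunLike.congr_fun (cJ_Rtilde n) (Jn n x)
    rw [hcJ, hJinv] at h
    exact h
  · intro n x
    have h := DFunLike.congr_fun (cJ_Pop n) (Jn n x)
    rw [hcJ, hJinv] at h
    exact h

end
end
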